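/- arXiv:0909.3009 — 6 statements merged into one kernel-verified Lean document; each statement's English description precedes it below -/
import Mathlib

section
/- Every lattice polynomial function p : Xⁿ → X satisfies, for every x ∈ Xⁿ and every c ∈ X: (1) p(x) = p(⟨x⟩_p); (2) p(x₁∨c, …, xₙ∨c) = p(x) ∨ ⟨c⟩_p; and (3) p(x₁∧c, …, xₙ∧c) = p(x) ∧ ⟨c⟩_p. -/
/-- Lattice polynomial functions in `n` variables on a bounded distributive lattice:
the smallest set of functions containing projections and constants and closed under
pointwise meet and join. -/
inductive IsLatticePolynomial {L : Type*} [DistribLattice L] [BoundedOrder L] {n : ℕ} :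
    ((Fin n → L) → L) → Prop
  | proj (i : Fin n) : IsLatticePolynomial (fun x => x i)
  | const (c : L) : IsLatticePolynomial (fun _ => c)
  | inf {p q : (Fin n → L) → L} :
      IsLatticePolynomial p → IsLatticePolynomial q → IsLatticePolynomial (fun x => p x ⊓ q x)
  | sup {p q : (Fin n → L) → L} :
      IsLatticePolynomial p → IsLatticePolynomial q → IsLatticePolynomial (fun x => p x ⊔ q x)

/-- The ternary median in a lattice. -/
def med {L : Type*} [Lattice L] (a b c : L) : L := (a ⊓ b) ⊔ (b ⊓ c) ⊔ (c ⊓ a)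

section Aux

variable {X : Type*} [DistribLattice X]

lemma med_eq_of_le {a b c : X} (h : a ≤ b) : med a c b = (a ⊔ c) ⊓ b := by
  unfold med
  rw [inf_sup_right, inf_eq_right.mpr h, inf_eq_left.mpr h]
  apply le_antisymm
  · apply sup_le (sup_le ?_ le_sup_right) ?_
    · exact le_sup_of_le_left inf_le_left
    · exact le_sup_left
  · exact sup_le le_sup_right (le_sup_of_le_left le_sup_right)

lemma conv_form {a b : X} (h : a ≤ b) (c : X) : (a ⊔ c) ⊓ b = a ⊔ c ⊓ b := by
  rw [inf_sup_right, inf_eq_left.mpr h]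

lemma diag_inf_aux (a a' b b' c : X) :
    ((a ⊔ c) ⊓ b) ⊓ ((a' ⊔ c) ⊓ b') = ((a ⊓ a') ⊔ c) ⊓ (b ⊓ b') := by
  rw [inf_inf_inf_comm, ← sup_inf_right]

lemma diag_sup_aux {a a' b b' : X} (h : a ≤ b) (h' : a' ≤ b') (c : X) :
    ((a ⊔ c) ⊓ b) ⊔ ((a' ⊔ c) ⊓ b') = ((a ⊔ a') ⊔ c) ⊓ (b ⊔ b') := by
  rw [conv_form h, conv_form h', conv_form (sup_le_sup h h'), sup_sup_sup_comm, ← inf_sup_left]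

lemma key_aux (u a' b' c : X) :
    u ⊓ ((a' ⊔ c) ⊓ b') = ((u ⊓ a') ⊓ b') ⊔ ((u ⊓ c) ⊓ b') := by
  rw [← inf_assoc, inf_sup_left, inf_sup_right]

/-- key lemma for the meet of two polynomials, sup-shift case -/
lemma key_inf {u v a a' b b' c : X} (hau : a ≤ u) (hub : u ≤ b) (hav : a' ≤ v) (hvb : v ≤ b') :
    (u ⊔ ((a ⊔ c) ⊓ b)) ⊓ (v ⊔ ((a' ⊔ c) ⊓ b')) =
      (u ⊓ v) ⊔ (((a ⊔ c) ⊓ b) ⊓ ((a' ⊔ c) ⊓ b')) := by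
  have hA : u ⊓ c ≤ (a ⊔ c) ⊓ b := le_inf (inf_le_right.trans le_sup_right) (inf_le_left.trans hub)
  have hB : v ⊓ c ≤ (a' ⊔ c) ⊓ b' :=
    le_inf (inf_le_right.trans le_sup_right) (inf_le_left.trans hvb)
  have h1 : u ⊓ ((a' ⊔ c) ⊓ b') ≤ (u ⊓ v) ⊔ (((a ⊔ c) ⊓ b) ⊓ ((a' ⊔ c) ⊓ b')) := by
    rw [key_aux]
    apply sup_le
    · exact le_sup_of_le_left (inf_le_left.trans (inf_le_inf_left u hav))
    · refine le_sup_of_le_right (le_inf (inf_le_left.trans hA) ?_)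
      exact le_inf ((inf_le_left.trans inf_le_right).trans le_sup_right) inf_le_right
  have h2 : ((a ⊔ c) ⊓ b) ⊓ v ≤ (u ⊓ v) ⊔ (((a ⊔ c) ⊓ b) ⊓ ((a' ⊔ c) ⊓ b')) := by
    rw [inf_comm, key_aux]
    apply sup_le
    · refine le_sup_of_le_left (inf_le_left.trans (le_inf (inf_le_right.trans hau) inf_le_left))
    · refine le_sup_of_le_right (le_inf ?_ (inf_le_left.trans hB))
      exact le_inf ((inf_le_left.trans inf_le_right).trans le_sup_right) inf_le_right
  set A := (a ⊔ c) ⊓ b with hAdef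
  set B := (a' ⊔ c) ⊓ b' with hBdef
  apply le_antisymm
  · rw [inf_sup_right, inf_sup_left, inf_sup_left]
    exact sup_le (sup_le le_sup_left h1) (sup_le h2 le_sup_right)
  · exact sup_le (inf_le_inf le_sup_left le_sup_left) (inf_le_inf le_sup_right le_sup_right)

/-- key lemma for the join of two polynomials, inf-shift case -/
lemma key_sup {u v a a' b b' c : X} (hau : a ≤ u) (hub : u ≤ b) (hav : a' ≤ v) (hvb : v ≤ b') :
    (u ⊓ ((a ⊔ c) ⊓ b)) ⊔ (v ⊓ ((a' ⊔ c) ⊓ b')) =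
      (u ⊔ v) ⊓ (((a ⊔ c) ⊓ b) ⊔ ((a' ⊔ c) ⊓ b')) := by
  have hA : u ⊓ c ≤ (a ⊔ c) ⊓ b := le_inf (inf_le_right.trans le_sup_right) (inf_le_left.trans hub)
  have hB : v ⊓ c ≤ (a' ⊔ c) ⊓ b' :=
    le_inf (inf_le_right.trans le_sup_right) (inf_le_left.trans hvb)
  have h1 : u ⊓ ((a' ⊔ c) ⊓ b') ≤ (u ⊓ ((a ⊔ c) ⊓ b)) ⊔ (v ⊓ ((a' ⊔ c) ⊓ b')) := by
    rw [key_aux]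
    apply sup_le
    · refine le_sup_of_le_right (le_inf ((inf_le_left.trans inf_le_right).trans hav) ?_)
      exact le_inf ((inf_le_left.trans inf_le_right).trans le_sup_left) inf_le_right
    · exact le_sup_of_le_left (le_inf (inf_le_left.trans inf_le_left) (inf_le_left.trans hA))
  have h2 : v ⊓ ((a ⊔ c) ⊓ b) ≤ (u ⊓ ((a ⊔ c) ⊓ b)) ⊔ (v ⊓ ((a' ⊔ c) ⊓ b')) := by
    rw [key_aux]
    apply sup_le
    · refine le_sup_of_le_left (le_inf ((inf_le_left.trans inf_le_right).trans hau) ?_)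
      exact le_inf ((inf_le_left.trans inf_le_right).trans le_sup_left) inf_le_right
    · exact le_sup_of_le_right (le_inf (inf_le_left.trans inf_le_left) (inf_le_left.trans hB))
  set A := (a ⊔ c) ⊓ b with hAdef
  set B := (a' ⊔ c) ⊓ b' with hBdef
  apply le_antisymm
  · exact sup_le (le_inf (inf_le_left.trans le_sup_left) (inf_le_right.trans le_sup_left))
      (le_inf (inf_le_left.trans le_sup_right) (inf_le_right.trans le_sup_right))
  · rw [inf_sup_left, inf_sup_right, inf_sup_right]
    exact sup_le (sup_le le_sup_left h2) (sup_le h1 le_sup_right)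

end Aux

section Poly

variable {X : Type*} [DistribLattice X] [BoundedOrder X] {n : ℕ} {p : (Fin n → X) → X}

lemma IsLatticePolynomial.mono (hp : IsLatticePolynomial p) :
    ∀ {x y : Fin n → X}, x ≤ y → p x ≤ p y := by
  induction hp with
  | proj i => exact fun h => h i
  | const c => exact fun _ => le_rfl
  | inf hp hq ihp ihq => exact fun h => inf_le_inf (ihp h) (ihq h)
  | sup hp hq ihp ihq => exact fun h => sup_le_sup (ihp h) (ihq h)

lemma IsLatticePolynomial.diag (hp : IsLatticePolynomial p) (c : X) :
    p (fun _ => c) = (p (fun _ => ⊥) ⊔ c) ⊓ p (fun _ => ⊤) := by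
  induction hp with
  | proj i => simp
  | const k => simp
  | inf hp hq ihp ihq => simp only [ihp, ihq, diag_inf_aux]
  | sup hp hq ihp ihq =>
      simp only [ihp, ihq]
      exact diag_sup_aux (hp.mono fun _ => bot_le) (hq.mono fun _ => bot_le) c

lemma IsLatticePolynomial.sup_shift (hp : IsLatticePolynomial p) (x : Fin n → X) (c : X) :
    p (fun i => x i ⊔ c) = p x ⊔ p (fun _ => c) := by
  induction hp with
  | proj i => rfl
  | const k => simp
  | inf hp hq ihp ihq =>
      simp only [ihp, ihq, hp.diag c, hq.diag c]
      exact key_inf (hp.mono fun _ => bot_le) (hp.mono fun _ => le_top)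
        (hq.mono fun _ => bot_le) (hq.mono fun _ => le_top)
  | sup hp hq ihp ihq =>
      simp only [ihp, ihq]
      exact sup_sup_sup_comm _ _ _ _

lemma IsLatticePolynomial.inf_shift (hp : IsLatticePolynomial p) (x : Fin n → X) (c : X) :
    p (fun i => x i ⊓ c) = p x ⊓ p (fun _ => c) := by
  induction hp with
  | proj i => rfl
  | const k => simp
  | inf hp hq ihp ihq =>
      simp only [ihp, ihq]
      exact inf_inf_inf_comm _ _ _ _
  | sup hp hq ihp ihq =>
      simp only [ihp, ihq, hp.diag c, hq.diag c]
      exact key_sup (hp.mono fun _ => bot_le) (hp.mono fun _ => le_top)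
        (hq.mono fun _ => bot_le) (hq.mono fun _ => le_top)

end Poly

theorem statement_0 {X : Type*} [DistribLattice X] [BoundedOrder X] {n : ℕ} (hn : 0 < n)
    (p : (Fin n → X) → X) (hp : IsLatticePolynomial p) (x : Fin n → X) (c : X) :
    p x = p (fun i => med (p (fun _ => ⊥)) (x i) (p (fun _ => ⊤))) ∧
    p (fun i => x i ⊔ c) = p x ⊔ med (p (fun _ => ⊥)) c (p (fun _ => ⊤)) ∧
    p (fun i => x i ⊓ c) = p x ⊓ med (p (fun _ => ⊥)) c (p (fun _ => ⊤)) := by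
  set a := p (fun _ => ⊥) with ha
  set b := p (fun _ => ⊤) with hb
  have hab : a ≤ b := hp.mono fun _ => le_top
  have hax : a ≤ p x := hp.mono fun _ => bot_le
  have hxb : p x ≤ b := hp.mono fun _ => le_top
  have hmed : ∀ y : X, med a y b = a ⊔ y ⊓ b := fun y => by
    rw [med_eq_of_le hab, conv_form hab]
  have hdiag : ∀ y : X, p (fun _ => y) = med a y b := fun y => by
    rw [hp.diag y, med_eq_of_le hab]
  refine ⟨?_, ?_, ?_⟩
  · have : (fun i => med a (x i) b) = (fun i => (x i ⊓ b) ⊔ a) := by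
      funext i; rw [hmed, sup_comm]
    rw [this, hp.sup_shift (fun i => x i ⊓ b) a, hp.inf_shift x b, hdiag a, hdiag b, hmed a, hmed b,
      inf_idem, sup_inf_self, sup_eq_right.mpr hab, inf_eq_left.mpr hxb, sup_eq_left.mpr hax]
  · rw [hp.sup_shift x c, hdiag c]
  · rw [hp.inf_shift x c, hdiag c]
end

section
/- Let p : Yⁿ → Y be a polynomial function, φ : X → Y a unary function, and f : Xⁿ → Y defined by f(x₁,…,xₙ) = p(φ(x₁),…,φ(xₙ)). Then for every y ∈ Yⁿ, med(f(0,…,0), p(y), f(1,…,1)) = p(med(φ(0), y₁, φ(1)), …, med(φ(0), yₙ, φ(1))). In particular, if φ(x) = med(φ(0), φ(x), φ(1)) for all x ∈ X, then f(x) = med(f(0,…,0), f(x), f(1,…,1)) for all x ∈ Xⁿ. -/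
/-- Disjunctive normal form for lattice polynomials. -/
lemma IsLatticePolynomial.dnf {Y : Type*} [DistribLattice Y] [BoundedOrder Y] {n : ℕ}
    {p : (Fin n → Y) → Y} (hp : IsLatticePolynomial p) :
    ∃ g : Finset (Fin n) → Y,
      ∀ y, p y = Finset.univ.sup (fun S : Finset (Fin n) => g S ⊓ S.inf y) := by
  induction hp with
  | proj i =>
    refine ⟨fun S => if S = {i} then ⊤ else ⊥, fun y => ?_⟩
    apply le_antisymm
    · have h := Finset.le_sup (f := fun S : Finset (Fin n) =>
        (if S = {i} then (⊤ : Y) else ⊥) ⊓ S.inf y) (Finset.mem_univ ({i} : Finset (Fin n)))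
      simpa using h
    · refine Finset.sup_le fun S _ => ?_
      dsimp only
      split_ifs with h
      · subst h; simp
      · simp
  | const c =>
    refine ⟨fun S => if S = ∅ then c else ⊥, fun y => ?_⟩
    apply le_antisymm
    · have h := Finset.le_sup (f := fun S : Finset (Fin n) =>
        (if S = ∅ then c else ⊥) ⊓ S.inf y) (Finset.mem_univ (∅ : Finset (Fin n)))
      simpa using h
    · refine Finset.sup_le fun S _ => ?_
      dsimp only
      split_ifs with h
      · exact inf_le_left
      · simp
  | inf hp hq ihp ihq =>
    obtain ⟨g1, h1⟩ := ihp
    obtain ⟨g2, h2⟩ := ihq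
    refine ⟨fun U => U.powerset.sup g1 ⊓ U.powerset.sup g2, fun y => ?_⟩
    apply le_antisymm
    · dsimp only
      rw [h1 y, h2 y, Finset.sup_inf_distrib_right]
      refine Finset.sup_le fun S _ => ?_
      rw [Finset.sup_inf_distrib_left]
      refine Finset.sup_le fun T _ => ?_
      refine le_trans ?_ (Finset.le_sup (Finset.mem_univ (S ∪ T)))
      have hg1 : g1 S ≤ (S ∪ T).powerset.sup g1 :=
        Finset.le_sup (Finset.mem_powerset.2 Finset.subset_union_left)
      have hg2 : g2 T ≤ (S ∪ T).powerset.sup g2 :=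
        Finset.le_sup (Finset.mem_powerset.2 Finset.subset_union_right)
      rw [Finset.inf_union]
      exact le_inf (le_inf (inf_le_left.trans (inf_le_left.trans hg1))
          (inf_le_right.trans (inf_le_left.trans hg2)))
        (le_inf (inf_le_left.trans inf_le_right) (inf_le_right.trans inf_le_right))
    · refine Finset.sup_le fun U _ => ?_
      dsimp only
      rw [h1 y, h2 y]
      refine le_inf ?_ ?_
      · refine le_trans (le_inf (inf_le_left.trans inf_le_left) inf_le_right) ?_
        rw [Finset.sup_inf_distrib_right]
        refine Finset.sup_le fun S hS => ?_
        refine le_trans ?_ (Finset.le_sup (Finset.mem_univ S))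
        exact inf_le_inf_left _ (Finset.inf_mono (Finset.mem_powerset.1 hS))
      · refine le_trans (le_inf (inf_le_left.trans inf_le_right) inf_le_right) ?_
        rw [Finset.sup_inf_distrib_right]
        refine Finset.sup_le fun S hS => ?_
        refine le_trans ?_ (Finset.le_sup (Finset.mem_univ S))
        exact inf_le_inf_left _ (Finset.inf_mono (Finset.mem_powerset.1 hS))
  | sup hp hq ihp ihq =>
    obtain ⟨g1, h1⟩ := ihp
    obtain ⟨g2, h2⟩ := ihq
    refine ⟨fun S => g1 S ⊔ g2 S, fun y => ?_⟩
    dsimp only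
    rw [h1 y, h2 y, ← Finset.sup_sup]
    exact Finset.sup_congr rfl fun S _ => by
      simp only [Pi.sup_apply]
      exact (inf_sup_right _ _ _).symm

/-- A lattice polynomial turns a pointwise join with a constant into a join. -/
lemma IsLatticePolynomial.map_sup_const {Y : Type*} [DistribLattice Y] [BoundedOrder Y] {n : ℕ}
    {p : (Fin n → Y) → Y} (hp : IsLatticePolynomial p) (y : Fin n → Y) (c : Y) :
    p (fun i => y i ⊔ c) = p y ⊔ p (fun _ => c) := by
  obtain ⟨g, hg⟩ := hp.dnf
  rw [hg, hg y, hg (fun _ => c)]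
  have key : ∀ S : Finset (Fin n), g S ⊓ S.inf (fun i => y i ⊔ c)
      = (g S ⊓ S.inf y) ⊔ (g S ⊓ c) := by
    intro S
    rw [← Finset.inf_sup_distrib_right, inf_sup_left]
  calc (Finset.univ.sup fun S : Finset (Fin n) => g S ⊓ S.inf (fun i => y i ⊔ c))
      = Finset.univ.sup ((fun S : Finset (Fin n) => g S ⊓ S.inf y)
          ⊔ (fun S : Finset (Fin n) => g S ⊓ c)) := by
        refine Finset.sup_congr rfl fun S _ => ?_
        simp only [Pi.sup_apply]
        exact key S
    _ = (Finset.univ.sup fun S : Finset (Fin n) => g S ⊓ S.inf y)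
          ⊔ (Finset.univ.sup fun S : Finset (Fin n) => g S ⊓ c) := Finset.sup_sup
    _ = (Finset.univ.sup fun S : Finset (Fin n) => g S ⊓ S.inf y)
          ⊔ (Finset.univ.sup fun S : Finset (Fin n) => g S ⊓ S.inf (fun _ => c)) := by
        apply le_antisymm
        · refine sup_le le_sup_left ?_
          refine le_trans (Finset.sup_le fun S _ => ?_) le_sup_right
          refine le_trans ?_ (Finset.le_sup (Finset.mem_univ S))
          exact inf_le_inf_left _ (Finset.le_inf fun i _ => le_rfl)
        · refine sup_le le_sup_left ?_
          refine Finset.sup_le fun S _ => ?_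
          rcases S.eq_empty_or_nonempty with h | h
          · subst h
            refine le_trans ?_ le_sup_left
            refine le_trans ?_ (Finset.le_sup (Finset.mem_univ (∅ : Finset (Fin n))))
            simp
          · rw [Finset.inf_const h]
            exact le_trans (Finset.le_sup (f := fun S : Finset (Fin n) => g S ⊓ c)
              (Finset.mem_univ S)) le_sup_right

/-- A lattice polynomial turns a pointwise meet with a constant into a meet. -/
lemma IsLatticePolynomial.map_inf_const {Y : Type*} [DistribLattice Y] [BoundedOrder Y] {n : ℕ}
    {p : (Fin n → Y) → Y} (hp : IsLatticePolynomial p) (y : Fin n → Y) (c : Y) :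
    p (fun i => y i ⊓ c) = p y ⊓ p (fun _ => c) := by
  obtain ⟨g, hg⟩ := hp.dnf
  rw [hg, hg y, hg (fun _ => c)]
  have hii : ∀ S : Finset (Fin n),
      S.inf (fun i => y i ⊓ c) = S.inf y ⊓ S.inf (fun _ => c) :=
    fun S => (Finset.inf_inf : S.inf (y ⊓ fun _ => c) = _)
  apply le_antisymm
  · refine Finset.sup_le fun S _ => ?_
    rw [hii S]
    refine le_inf ?_ ?_
    · exact le_trans (le_inf inf_le_left (inf_le_right.trans inf_le_left))
        (Finset.le_sup (f := fun S : Finset (Fin n) => g S ⊓ S.inf y) (Finset.mem_univ S))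
    · exact le_trans (le_inf inf_le_left (inf_le_right.trans inf_le_right))
        (Finset.le_sup (f := fun S : Finset (Fin n) => g S ⊓ S.inf fun _ => c)
          (Finset.mem_univ S))
  · rw [Finset.sup_inf_distrib_right]
    refine Finset.sup_le fun S _ => ?_
    rw [Finset.sup_inf_distrib_left]
    refine Finset.sup_le fun T _ => ?_
    rcases T.eq_empty_or_nonempty with h | h
    · subst h
      refine le_trans ?_ (Finset.le_sup (Finset.mem_univ (∅ : Finset (Fin n))))
      simpa using le_inf (inf_le_right.trans inf_le_left) le_top
    · refine le_trans ?_ (Finset.le_sup (Finset.mem_univ S))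
      rw [hii S]
      have hc : T.inf (fun _ => c) ≤ S.inf (fun _ => c) := by
        rw [Finset.inf_const h]
        exact Finset.le_inf fun i _ => le_rfl
      exact le_inf (inf_le_left.trans inf_le_left)
        (le_inf (inf_le_left.trans inf_le_right) (inf_le_right.trans (inf_le_right.trans hc)))

lemma med_eq {Y : Type*} [DistribLattice Y] (a x b : Y) :
    med a x b = (x ⊓ (a ⊔ b)) ⊔ (a ⊓ b) := by
  unfold med
  rw [inf_sup_left, inf_comm a x, inf_comm b a]

/-- A lattice polynomial commutes with pinching by two constants. -/
lemma IsLatticePolynomial.med_const {Y : Type*} [DistribLattice Y] [BoundedOrder Y] {n : ℕ}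
    {p : (Fin n → Y) → Y} (hp : IsLatticePolynomial p) (a b : Y) (y : Fin n → Y) :
    med (p (fun _ => a)) (p y) (p (fun _ => b))
      = p (fun i => med a (y i) b) := by
  have h1 : (fun i => med a (y i) b) = fun i => ((fun j => y j ⊓ (a ⊔ b)) i) ⊔ (a ⊓ b) :=
    funext fun i => med_eq a (y i) b
  rw [h1, hp.map_sup_const, hp.map_inf_const]
  have hsup : p (fun _ => a ⊔ b) = p (fun _ => a) ⊔ p (fun _ => b) := by
    have := hp.map_sup_const (fun _ => a) b
    simpa using this
  have hinf : p (fun _ => a ⊓ b) = p (fun _ => a) ⊓ p (fun _ => b) := by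
    have := hp.map_inf_const (fun _ => a) b
    simpa using this
  rw [hsup, hinf, ← med_eq]

theorem statement_2 {X Y : Type*} [DistribLattice X] [BoundedOrder X]
    [DistribLattice Y] [BoundedOrder Y] {n : ℕ} (hn : 0 < n)
    (p : (Fin n → Y) → Y) (hp : IsLatticePolynomial p) (φ : X → Y)
    (f : (Fin n → X) → Y) (hf : ∀ x, f x = p (fun i => φ (x i))) :
    (∀ y : Fin n → Y,
      med (f (fun _ => ⊥)) (p y) (f (fun _ => ⊤)) = p (fun i => med (φ ⊥) (y i) (φ ⊤))) ∧
    ((∀ x : X, φ x = med (φ ⊥) (φ x) (φ ⊤)) →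
      ∀ x : Fin n → X, f x = med (f (fun _ => ⊥)) (f x) (f (fun _ => ⊤))) := by
  have key : ∀ y : Fin n → Y,
      med (f (fun _ => ⊥)) (p y) (f (fun _ => ⊤)) = p (fun i => med (φ ⊥) (y i) (φ ⊤)) := by
    intro y
    rw [hf, hf]
    exact hp.med_const (φ ⊥) (φ ⊤) y
  refine ⟨key, fun h x => ?_⟩
  have h2 : (fun i => φ (x i)) = fun i => med (φ ⊥) (φ (x i)) (φ ⊤) :=
    funext fun i => h (x i)
  calc f x = p (fun i => φ (x i)) := hf x
    _ = med (f (fun _ => ⊥)) (p (fun i => φ (x i))) (f (fun _ => ⊤)) := by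
        rw [key (fun i => φ (x i)), ← h2]
    _ = med (f (fun _ => ⊥)) (f x) (f (fun _ => ⊤)) := by rw [← hf x]
end

section
/- A function f : Xⁿ → Y is a quasi-polynomial function if and only if it is quasi-median decomposable, i.e., for every x ∈ Xⁿ and every k ∈ {1,…,n}, f(x) = med(f(x_k^0), δ_f(x_k), f(x_k^1)). -/
/-- `f` is a quasi-polynomial function. -/
def IsQuasiPolynomial {X Y : Type*} [DistribLattice X] [BoundedOrder X]
    [DistribLattice Y] [BoundedOrder Y] {n : ℕ} (f : (Fin n → X) → Y) : Prop :=
  ∃ (p : (Fin n → Y) → Y) (φ : X → Y), IsLatticePolynomial p ∧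
    (∀ x : X, φ x = med (φ ⊥) (φ x) (φ ⊤)) ∧ (∀ x, f x = p (fun i => φ (x i)))

section MedLemmas

variable {L : Type*} [DistribLattice L]

lemma med_le_sup12 (u v w : L) : med u v w ≤ u ⊔ v := by
  unfold med
  exact sup_le (sup_le (inf_le_left.trans le_sup_left) (inf_le_left.trans le_sup_right))
    (inf_le_right.trans le_sup_left)

lemma inf12_le_med (u v w : L) : u ⊓ v ≤ med u v w := by
  unfold med
  exact le_sup_left.trans le_sup_left

lemma med_inf_mid (u m v : L) : med u m v ⊓ m = (u ⊓ m) ⊔ (m ⊓ v) := by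
  unfold med
  apply le_antisymm
  · rw [inf_sup_right, inf_sup_right]
    refine sup_le (sup_le ?_ ?_) ?_
    · exact inf_le_left.trans le_sup_left
    · exact inf_le_left.trans le_sup_right
    · exact le_trans (le_inf (inf_le_left.trans inf_le_right) inf_le_right) le_sup_left
  · refine le_inf ?_ ?_
    · exact sup_le (le_sup_left.trans le_sup_left) (le_sup_right.trans le_sup_left)
    · exact sup_le inf_le_right inf_le_left

lemma med_sup_mid (u m v : L) : med u m v ⊔ m = (u ⊓ v) ⊔ m := by
  unfold med
  apply le_antisymm
  · refine sup_le (sup_le (sup_le ?_ ?_) ?_) le_sup_right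
    · exact inf_le_right.trans le_sup_right
    · exact inf_le_left.trans le_sup_right
    · exact (le_inf inf_le_right inf_le_left).trans le_sup_left
  · refine sup_le ?_ le_sup_right
    exact ((le_inf inf_le_right inf_le_left).trans le_sup_right).trans le_sup_left

lemma med_eq_self (m M t : L) (h1 : m ⊓ M ≤ t) (h2 : t ≤ m ⊔ M) : med m t M = t := by
  unfold med
  apply le_antisymm
  · exact sup_le (sup_le inf_le_right inf_le_left) ((inf_comm M m).le.trans h1)
  · calc t = t ⊓ (m ⊔ M) := (inf_eq_left.mpr h2).symm
      _ = t ⊓ m ⊔ t ⊓ M := inf_sup_left _ _ _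
      _ ≤ (m ⊓ t) ⊔ (t ⊓ M) := sup_le_sup_right (inf_comm t m).le _
      _ ≤ (m ⊓ t) ⊔ (t ⊓ M) ⊔ (M ⊓ m) := le_sup_left

lemma aux_inf (s bp ap bq aq : L) (h1 : ap ≤ bp) (h2 : aq ≤ bq) :
    ((s ⊓ bp) ⊔ ap) ⊓ ((s ⊓ bq) ⊔ aq) = (s ⊓ (bp ⊓ bq)) ⊔ (ap ⊓ aq) := by
  apply le_antisymm
  · rw [inf_sup_left, inf_sup_right, inf_sup_right]
    refine sup_le (sup_le ?_ ?_) (sup_le ?_ ?_)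
    · refine le_trans (le_inf (inf_le_left.trans inf_le_left)
        (le_inf (inf_le_left.trans inf_le_right) (inf_le_right.trans inf_le_right))) le_sup_left
    · refine le_trans (le_inf (inf_le_right.trans inf_le_left)
        (le_inf (inf_le_left.trans h1) (inf_le_right.trans inf_le_right))) le_sup_left
    · refine le_trans (le_inf (inf_le_left.trans inf_le_left)
        (le_inf (inf_le_left.trans inf_le_right) (inf_le_right.trans h2))) le_sup_left
    · exact le_sup_right
  · refine sup_le (le_inf ?_ ?_) (le_inf ?_ ?_)
    · exact le_trans (le_inf inf_le_left (inf_le_right.trans inf_le_left)) le_sup_left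
    · exact le_trans (le_inf inf_le_left (inf_le_right.trans inf_le_right)) le_sup_left
    · exact inf_le_left.trans le_sup_right
    · exact inf_le_right.trans le_sup_right

lemma aux_sup (s bp ap bq aq : L) :
    ((s ⊓ bp) ⊔ ap) ⊔ ((s ⊓ bq) ⊔ aq) = (s ⊓ (bp ⊔ bq)) ⊔ (ap ⊔ aq) := by
  rw [sup_sup_sup_comm, inf_sup_left]

lemma key_med (A a₁ b₁ B c d t : L) (hA : A ≤ a₁) (hab : a₁ ≤ b₁) (hB : b₁ ≤ B)
    (hlow : c ⊓ d ≤ t) (hhigh : t ≤ c ⊔ d) :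
    med ((c ⊓ b₁) ⊔ a₁) ((t ⊓ B) ⊔ A) ((d ⊓ b₁) ⊔ a₁) = (t ⊓ b₁) ⊔ a₁ := by
  have hX : (c ⊓ b₁) ⊔ a₁ ≤ b₁ := sup_le inf_le_right hab
  have hZ : (d ⊓ b₁) ⊔ a₁ ≤ b₁ := sup_le inf_le_right hab
  have hM : (t ⊓ B) ⊔ A ≤ t ⊔ a₁ := sup_le (inf_le_left.trans le_sup_left) (hA.trans le_sup_right)
  unfold med
  apply le_antisymm
  · refine sup_le (sup_le ?_ ?_) ?_
    · refine le_trans (inf_le_inf hX hM) ?_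
      rw [inf_sup_left]
      exact sup_le ((inf_comm b₁ t).le.trans le_sup_left) (inf_le_right.trans le_sup_right)
    · refine le_trans (inf_le_inf hM hZ) ?_
      rw [inf_sup_right]
      exact sup_le le_sup_left (inf_le_left.trans le_sup_right)
    · rw [inf_sup_left]
      refine sup_le ?_ (inf_le_right.trans le_sup_right)
      rw [inf_sup_right]
      refine sup_le ?_ (inf_le_left.trans le_sup_right)
      refine le_trans (le_inf ?_ ?_) le_sup_left
      · exact le_trans (le_inf (inf_le_right.trans inf_le_left) (inf_le_left.trans inf_le_left))
          hlow
      · exact inf_le_left.trans inf_le_right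
  · refine sup_le ?_ ?_
    · have h3 : t ⊓ b₁ ≤ (t ⊓ B) ⊔ A := (inf_le_inf_left t hB).trans le_sup_left
      have h4 : t ⊓ b₁ ≤ ((c ⊓ b₁) ⊔ a₁) ⊔ ((d ⊓ b₁) ⊔ a₁) := by
        refine le_trans (inf_le_inf_right b₁ hhigh) ?_
        rw [inf_sup_right]
        exact sup_le (le_sup_left.trans le_sup_left) (le_sup_left.trans le_sup_right)
      refine le_trans (le_inf h3 h4) ?_
      rw [inf_sup_left]
      refine le_trans ?_ le_sup_left
      exact sup_le ((inf_comm _ _).le.trans le_sup_left) le_sup_right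
    · exact le_trans (le_inf le_sup_right le_sup_right) le_sup_right

end MedLemmas

section PolyLemmas

variable {L : Type*} [DistribLattice L] [BoundedOrder L] {n : ℕ}

lemma poly_monotone {p : (Fin n → L) → L} (hp : IsLatticePolynomial p) : Monotone p := by
  induction hp with
  | proj i => exact fun x y hxy => hxy i
  | const c => exact monotone_const
  | inf hp hq ihp ihq => exact fun x y hxy => inf_le_inf (ihp hxy) (ihq hxy)
  | sup hp hq ihp ihq => exact fun x y hxy => sup_le_sup (ihp hxy) (ihq hxy)

lemma poly_unary {p : (Fin n → L) → L} (hp : IsLatticePolynomial p) (z : L → Fin n → L)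
    (hz : ∀ i, (∀ s, z s i = s) ∨ ∃ c, ∀ s, z s i = c) :
    ∀ s, p (z s) = (s ⊓ p (z ⊤)) ⊔ p (z ⊥) := by
  induction hp with
  | proj i =>
    intro s
    show z s i = s ⊓ z ⊤ i ⊔ z ⊥ i
    rcases hz i with hid | ⟨c, hc⟩
    · rw [hid s, hid ⊤, hid ⊥]; simp
    · rw [hc s, hc ⊤, hc ⊥]
      exact (sup_eq_right.mpr inf_le_right).symm
  | const c =>
    intro s
    exact (sup_eq_right.mpr inf_le_right).symm
  | @inf p q hp hq ihp ihq =>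
    intro s
    have hap : p (z ⊥) ≤ p (z ⊤) := by
      have h' := ihp ⊤; rw [top_inf_eq] at h'
      exact le_sup_right.trans h'.ge
    have haq : q (z ⊥) ≤ q (z ⊤) := by
      have h' := ihq ⊤; rw [top_inf_eq] at h'
      exact le_sup_right.trans h'.ge
    show p (z s) ⊓ q (z s) = s ⊓ (p (z ⊤) ⊓ q (z ⊤)) ⊔ p (z ⊥) ⊓ q (z ⊥)
    rw [ihp s, ihq s]
    exact aux_inf s (p (z ⊤)) (p (z ⊥)) (q (z ⊤)) (q (z ⊥)) hap haq
  | @sup p q hp hq ihp ihq =>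
    intro s
    show p (z s) ⊔ q (z s) = s ⊓ (p (z ⊤) ⊔ q (z ⊤)) ⊔ (p (z ⊥) ⊔ q (z ⊥))
    rw [ihp s, ihq s]
    exact aux_sup s (p (z ⊤)) (p (z ⊥)) (q (z ⊤)) (q (z ⊥))

end PolyLemmas

section Backward

variable {X Y : Type*} [DistribLattice X] [BoundedOrder X]
  [DistribLattice Y] [BoundedOrder Y] {n : ℕ}

lemma phi_med (f : (Fin n → X) → Y) (φ : X → Y)
    (hdiag : ∀ a : X, φ a = f (fun _ => a))
    (h : ∀ (x : Fin n → X) (k : Fin n),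
      f x = med (f (Function.update x k ⊥)) (φ (x k)) (f (Function.update x k ⊤)))
    (a : X) : φ a = med (φ ⊥) (φ a) (φ ⊤) := by
  have key2 : ∀ s : Finset (Fin n), ∀ ε : Fin n → X, (∀ i, ε i = ⊥ ∨ ε i = ⊤) →
      (∀ i, i ∉ s → ε i = ⊥) → f ε ≤ φ ⊥ ⊔ φ ⊤ ∧ φ ⊥ ⊓ φ ⊤ ≤ f ε := by
    intro s
    induction s using Finset.induction_on with
    | empty =>
      intro ε hb h0
      have hε : ε = fun _ => ⊥ := funext fun i => h0 i (Finset.notMem_empty i)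
      rw [hε, ← hdiag ⊥]
      exact ⟨le_sup_left, inf_le_left⟩
    | @insert j s hj ih =>
      intro ε hb h0
      rcases hb j with hbj | hbj
      · refine ih ε hb fun i hi => ?_
        by_cases hij : i = j
        · rw [hij]; exact hbj
        · exact h0 i (by simp [Finset.mem_insert, hij, hi])
      · have hdec := h ε j
        have hup : Function.update ε j ⊤ = ε := by
          rw [← hbj]; exact Function.update_eq_self j ε
        rw [hup, hbj] at hdec
        have hb' : ∀ i, Function.update ε j ⊥ i = ⊥ ∨ Function.update ε j ⊥ i = ⊤ := by
          intro i; by_cases hij : i = j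
          · subst hij; rw [Function.update_self]; exact Or.inl rfl
          · rw [Function.update_of_ne hij]; exact hb i
        have h0' : ∀ i, i ∉ s → Function.update ε j ⊥ i = ⊥ := by
          intro i hi; by_cases hij : i = j
          · subst hij; rw [Function.update_self]
          · rw [Function.update_of_ne hij]
            exact h0 i (by simp [Finset.mem_insert, hij, hi])
        obtain ⟨ih1, ih2⟩ := ih (Function.update ε j ⊥) hb' h0'
        constructor
        · calc f ε = med (f (Function.update ε j ⊥)) (φ ⊤) (f ε) := hdec
            _ ≤ f (Function.update ε j ⊥) ⊔ φ ⊤ := med_le_sup12 _ _ _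
            _ ≤ φ ⊥ ⊔ φ ⊤ := sup_le ih1 le_sup_right
        · calc φ ⊥ ⊓ φ ⊤ ≤ f (Function.update ε j ⊥) ⊓ φ ⊤ := le_inf ih2 inf_le_right
            _ ≤ med (f (Function.update ε j ⊥)) (φ ⊤) (f ε) := inf12_le_med _ _ _
            _ = f ε := hdec.symm
  have hbin : ∀ ε : Fin n → X, (∀ i, ε i = ⊥ ∨ ε i = ⊤) →
      f ε ≤ φ ⊥ ⊔ φ ⊤ ∧ φ ⊥ ⊓ φ ⊤ ≤ f ε :=
    fun ε hb => key2 Finset.univ ε hb (fun i hi => absurd (Finset.mem_univ i) hi)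
  have key3 : ∀ s : Finset (Fin n), ∀ ε : Fin n → X, (∀ i, ε i = ⊥ ∨ ε i = ⊤) →
      f (fun i => if i ∈ s then a else ε i) ⊓ φ a ≤ φ ⊥ ⊔ φ ⊤ ∧
      φ ⊥ ⊓ φ ⊤ ≤ f (fun i => if i ∈ s then a else ε i) ⊔ φ a := by
    intro s
    induction s using Finset.induction_on with
    | empty =>
      intro ε hb
      have he : (fun i => if i ∈ (∅ : Finset (Fin n)) then a else ε i) = ε := by
        funext i; simp
      rw [he]
      obtain ⟨h1, h2⟩ := hbin ε hb
      exact ⟨inf_le_left.trans h1, h2.trans le_sup_left⟩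
    | @insert j s hj ih =>
      intro ε hb
      have hdec := h (fun i => if i ∈ insert j s then a else ε i) j
      have hu : ∀ c : X, Function.update (fun i => if i ∈ insert j s then a else ε i) j c
          = fun i => if i ∈ s then a else Function.update ε j c i := by
        intro c; funext i
        by_cases hij : i = j
        · subst hij; rw [Function.update_self, if_neg hj, Function.update_self]
        · rw [Function.update_of_ne hij, Function.update_of_ne hij]
          by_cases his : i ∈ s
          · rw [if_pos his, if_pos (Finset.mem_insert_of_mem his)]
          · rw [if_neg his, if_neg (by simp [Finset.mem_insert, hij, his])]
      have hmid : (if j ∈ insert j s then a else ε j) = a := if_pos (Finset.mem_insert_self j s)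
      rw [hu ⊥, hu ⊤, hmid] at hdec
      have hbb : ∀ i, Function.update ε j ⊥ i = ⊥ ∨ Function.update ε j ⊥ i = ⊤ := by
        intro i; by_cases hij : i = j
        · subst hij; rw [Function.update_self]; exact Or.inl rfl
        · rw [Function.update_of_ne hij]; exact hb i
      have hbt : ∀ i, Function.update ε j ⊤ i = ⊥ ∨ Function.update ε j ⊤ i = ⊤ := by
        intro i; by_cases hij : i = j
        · subst hij; rw [Function.update_self]; exact Or.inr rfl
        · rw [Function.update_of_ne hij]; exact hb i
      obtain ⟨ihb1, ihb2⟩ := ih (Function.update ε j ⊥) hbb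
      obtain ⟨iht1, iht2⟩ := ih (Function.update ε j ⊤) hbt
      constructor
      · rw [hdec, med_inf_mid]
        exact sup_le ihb1 ((inf_comm _ _).le.trans iht1)
      · rw [hdec, med_sup_mid, sup_inf_right]
        exact le_inf ihb2 iht2
  have he : (fun i => if i ∈ (Finset.univ : Finset (Fin n)) then a else (⊥ : X)) =
      fun _ => a := by
    funext i; simp
  obtain ⟨h1, h2⟩ := key3 Finset.univ (fun _ => ⊥) (fun i => Or.inl rfl)
  rw [he, ← hdiag a] at h1 h2
  rw [inf_idem] at h1
  rw [sup_idem] at h2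
  exact (med_eq_self _ _ _ h2 h1).symm

lemma rep_aux (φ : X → Y) :
    ∀ k : ℕ, k ≤ n → ∀ g : (Fin n → X) → Y,
      (∀ x y : Fin n → X, (∀ j : Fin n, (j : ℕ) < k → x j = y j) → g x = g y) →
      (∀ (x : Fin n → X) (j : Fin n), (j : ℕ) < k →
        g x = med (g (Function.update x j ⊥)) (φ (x j)) (g (Function.update x j ⊤))) →
      ∃ p : (Fin n → Y) → Y, IsLatticePolynomial p ∧ ∀ x, g x = p (fun i => φ (x i)) := by
  intro k
  induction k with
  | zero =>
    intro _ g hdep _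
    exact ⟨fun _ => g (fun _ => ⊥), .const _,
      fun x => hdep x (fun _ => ⊥) (fun j hj => absurd hj (Nat.not_lt_zero _))⟩
  | succ k ih =>
    intro hk g hdep hdec
    have hkn : k < n := Nat.lt_of_lt_of_le (Nat.lt_succ_self k) hk
    have hlt : ∀ j' : Fin n, (j' : ℕ) < k → j' ≠ (⟨k, hkn⟩ : Fin n) :=
      fun j' hj' hh => absurd (congrArg Fin.val hh) (Nat.ne_of_lt hj')
    have build : ∀ c : X, ∃ p : (Fin n → Y) → Y, IsLatticePolynomial p ∧
        ∀ x, g (Function.update x (⟨k, hkn⟩ : Fin n) c) = p (fun i => φ (x i)) := by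
      intro c
      refine ih (Nat.le_of_succ_le hk) (fun x => g (Function.update x ⟨k, hkn⟩ c)) ?_ ?_
      · intro x y hxy
        refine hdep _ _ fun j' hj' => ?_
        by_cases hjj : j' = (⟨k, hkn⟩ : Fin n)
        · subst hjj; rw [Function.update_self, Function.update_self]
        · rw [Function.update_of_ne hjj, Function.update_of_ne hjj]
          refine hxy j' ?_
          exact lt_of_le_of_ne (Nat.lt_succ_iff.mp hj') fun hh => hjj (Fin.ext hh)
      · intro x j' hj'
        have hne : j' ≠ (⟨k, hkn⟩ : Fin n) := hlt j' hj'
        have hd := hdec (Function.update x ⟨k, hkn⟩ c) j' (Nat.lt_succ_of_lt hj')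
        rw [Function.update_of_ne hne] at hd
        rw [Function.update_comm hne.symm, Function.update_comm hne.symm] at hd
        exact hd
    obtain ⟨pb, hpb, hrb⟩ := build ⊥
    obtain ⟨pt, hpt, hrt⟩ := build ⊤
    refine ⟨fun y => med (pb y) (y ⟨k, hkn⟩) (pt y), ?_, ?_⟩
    · exact .sup (.sup (.inf hpb (.proj _)) (.inf (.proj _) hpt)) (.inf hpt hpb)
    · intro x
      have hd := hdec x ⟨k, hkn⟩ (Nat.lt_succ_self k)
      rw [hrb x, hrt x] at hd
      exact hd

end Backward

theorem statement_5 {X Y : Type*} [DistribLattice X] [BoundedOrder X]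
    [DistribLattice Y] [BoundedOrder Y] {n : ℕ} (hn : 0 < n)
    (f : (Fin n → X) → Y) :
    IsQuasiPolynomial f ↔
      ∀ (x : Fin n → X) (k : Fin n),
        f x = med (f (Function.update x k ⊥)) (f (fun _ => x k)) (f (Function.update x k ⊤)) := by
  constructor
  · rintro ⟨p, φ, hp, hφ, hf⟩
    intro x k
    have hz : ∀ i : Fin n, (∀ s, Function.update (fun i => φ (x i)) k s i = s) ∨
        ∃ c, ∀ s : Y, Function.update (fun i => φ (x i)) k s i = c := by
      intro i
      by_cases hik : i = k
      · subst hik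
        exact Or.inl fun s => Function.update_self i s (fun i => φ (x i))
      · exact Or.inr ⟨φ (x i), fun s => Function.update_of_ne hik s (fun i => φ (x i))⟩
    have hq := poly_unary hp (fun s => Function.update (fun i => φ (x i)) k s) hz
    have hδ := poly_unary hp (fun s _ => s) (fun i => Or.inl fun _ => rfl)
    have hmono := poly_monotone hp
    have hA : p (fun _ => ⊥) ≤ p (Function.update (fun i => φ (x i)) k ⊥) :=
      hmono fun i => bot_le
    have hab : p (Function.update (fun i => φ (x i)) k ⊥) ≤
        p (Function.update (fun i => φ (x i)) k ⊤) := by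
      refine hmono fun i => ?_
      by_cases hik : i = k
      · subst hik; rw [Function.update_self, Function.update_self]; exact bot_le
      · rw [Function.update_of_ne hik, Function.update_of_ne hik]
    have hB : p (Function.update (fun i => φ (x i)) k ⊤) ≤ p (fun _ => ⊤) :=
      hmono fun i => le_top
    have hct : φ ⊥ ⊓ φ ⊤ ≤ φ (x k) := by
      calc φ ⊥ ⊓ φ ⊤ ≤ med (φ ⊥) (φ (x k)) (φ ⊤) := by
            unfold med
            exact (inf_comm _ _).le.trans le_sup_right
        _ = φ (x k) := (hφ (x k)).symm
    have htc : φ (x k) ≤ φ ⊥ ⊔ φ ⊤ := by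
      calc φ (x k) = med (φ ⊥) (φ (x k)) (φ ⊤) := hφ (x k)
        _ ≤ φ ⊥ ⊔ φ ⊤ := by
            unfold med
            exact sup_le (sup_le (inf_le_left.trans le_sup_left)
              (inf_le_right.trans le_sup_right)) (inf_le_right.trans le_sup_left)
    have eb : (fun i => φ (Function.update x k ⊥ i)) =
        Function.update (fun i => φ (x i)) k (φ ⊥) := by
      funext i
      by_cases hik : i = k
      · subst hik; rw [Function.update_self, Function.update_self]
      · rw [Function.update_of_ne hik, Function.update_of_ne hik]
    have et : (fun i => φ (Function.update x k ⊤ i)) =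
        Function.update (fun i => φ (x i)) k (φ ⊤) := by
      funext i
      by_cases hik : i = k
      · subst hik; rw [Function.update_self, Function.update_self]
      · rw [Function.update_of_ne hik, Function.update_of_ne hik]
    have eself : Function.update (fun i => φ (x i)) k (φ (x k)) = (fun i => φ (x i)) := by
      funext i
      by_cases hik : i = k
      · subst hik; rw [Function.update_self]
      · rw [Function.update_of_ne hik]
    have epy : p (fun i => φ (x i)) =
        (φ (x k) ⊓ p (Function.update (fun i => φ (x i)) k ⊤)) ⊔
          p (Function.update (fun i => φ (x i)) k ⊥) := by
      have h1 := hq (φ (x k))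
      rw [eself] at h1
      exact h1
    rw [hf x, hf (Function.update x k ⊥), hf (Function.update x k ⊤), hf (fun _ => x k)]
    rw [eb, et, epy, hq (φ ⊥), hq (φ ⊤), hδ (φ (x k))]
    exact (key_med _ _ _ _ _ _ _ hA hab hB hct htc).symm
  · intro h
    obtain ⟨p, hp, hfp⟩ := rep_aux (fun a => f (fun _ => a)) n le_rfl f
      (fun x y hxy => by rw [show x = y from funext fun j => hxy j j.isLt])
      (fun x j _ => h x j)
    exact ⟨p, fun a => f (fun _ => a), hp,
      fun a => phi_med f _ (fun _ => rfl) h a, hfp⟩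
end

section
/- Let f : Xⁿ → Y be an order-preserving function whose diagonal section δ_f is a lattice homomorphism. Then the following are equivalent: (i) f is a quasi-polynomial function; (ii) f is quasi-∧-homogeneous and quasi-∨-homogeneous; (iii) f is quasi-∧-homogeneous and horizontally ∨-decomposable; (iv) f is horizontally ∧-decomposable and quasi-∨-homogeneous. -/
open scoped Classical

section Props

variable {X Y : Type*} [DistribLattice X] [BoundedOrder X] [DistribLattice Y] [BoundedOrder Y]
  {n : ℕ}

/-- `f` is quasi-∧-homogeneous. -/
def QuasiInfHomogeneous (f : (Fin n → X) → Y) : Prop :=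
  ∀ (x : Fin n → X) (c : X), f (fun i => x i ⊓ c) = f x ⊓ f (fun _ => c)

/-- `f` is quasi-∨-homogeneous. -/
def QuasiSupHomogeneous (f : (Fin n → X) → Y) : Prop :=
  ∀ (x : Fin n → X) (c : X), f (fun i => x i ⊔ c) = f x ⊔ f (fun _ => c)

/-- `f` is horizontally ∨-decomposable. -/
noncomputable def HorizSupDecomposable (f : (Fin n → X) → Y) : Prop :=
  ∀ (x : Fin n → X) (c : X),
    f x = f (fun i => x i ⊓ c) ⊔ f (fun i => if x i ≤ c then ⊥ else x i)

/-- `f` is horizontally ∧-decomposable. -/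
noncomputable def HorizInfDecomposable (f : (Fin n → X) → Y) : Prop :=
  ∀ (x : Fin n → X) (c : X),
    f x = f (fun i => x i ⊔ c) ⊓ f (fun i => if c ≤ x i then ⊤ else x i)

end Props

set_option linter.unusedSectionVars false

namespace QPaux

variable {L : Type*} [DistribLattice L] [BoundedOrder L] {n : ℕ}

/-- characteristic tuple of a subset -/
noncomputable def eS (S : Finset (Fin n)) : Fin n → L := fun i => if i ∈ S then ⊤ else ⊥

lemma eS_mono {S T : Finset (Fin n)} (h : S ⊆ T) : (eS S : Fin n → L) ≤ eS T := by
  intro i; unfold eS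
  by_cases hi : i ∈ S
  · simp [hi, h hi]
  · simp [hi]

lemma poly_mono {p : (Fin n → L) → L} (hp : IsLatticePolynomial p) : Monotone p := by
  induction hp with
  | proj i => exact fun a b h => h i
  | const c => exact monotone_const
  | inf hp hq ihp ihq => exact fun a b h => inf_le_inf (ihp h) (ihq h)
  | sup hp hq ihp ihq => exact fun a b h => sup_le_sup (ihp h) (ihq h)

lemma poly_finsetSup {ι : Type*} (s : Finset ι) (g : ι → (Fin n → L) → L)
    (h : ∀ i ∈ s, IsLatticePolynomial (g i)) :
    IsLatticePolynomial (fun x => s.sup (fun i => g i x)) := by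
  classical
  induction s using Finset.induction with
  | empty => simpa using IsLatticePolynomial.const (⊥ : L)
  | insert a s hne ih =>
    simp only [Finset.sup_insert]
    exact IsLatticePolynomial.sup (h a (Finset.mem_insert_self a s))
      (ih fun i hi => h i (Finset.mem_insert_of_mem hi))

lemma poly_finsetInfProj (S : Finset (Fin n)) :
    IsLatticePolynomial (fun x : Fin n → L => S.inf (fun i => x i)) := by
  classical
  induction S using Finset.induction with
  | empty => simpa using IsLatticePolynomial.const (⊤ : L)
  | insert a s hne ih =>
    simp only [Finset.inf_insert]
    exact IsLatticePolynomial.inf (IsLatticePolynomial.proj a) ih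

lemma goodstein {p : (Fin n → L) → L} (hp : IsLatticePolynomial p) (z : Fin n → L) :
    p z = (Finset.univ.powerset).sup (fun S => p (eS S) ⊓ S.inf (fun i => z i)) := by
  classical
  induction hp with
  | proj i =>
    beta_reduce
    apply le_antisymm
    · have h1 : ({i} : Finset (Fin n)) ∈ Finset.univ.powerset :=
        Finset.mem_powerset.2 (Finset.subset_univ _)
      have h2 := Finset.le_sup (f := fun S : Finset (Fin n) => eS S i ⊓ S.inf fun j => z j) h1
      refine le_trans ?_ h2
      simp [eS]
    · apply Finset.sup_le
      intro S _
      by_cases hi : i ∈ S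
      · exact le_trans inf_le_right (Finset.inf_le hi)
      · simp [eS, hi]
  | const c =>
    beta_reduce
    apply le_antisymm
    · have h2 := Finset.le_sup (f := fun S : Finset (Fin n) => c ⊓ S.inf fun j => z j)
        (Finset.empty_mem_powerset (Finset.univ : Finset (Fin n)))
      refine le_trans ?_ h2
      simp
    · exact Finset.sup_le fun S _ => inf_le_left
  | inf hp hq ihp ihq =>
    rename_i p q
    beta_reduce
    apply le_antisymm
    · rw [ihp, ihq, Finset.sup_inf_distrib_left]
      apply Finset.sup_le
      intro S hS
      rw [inf_comm, Finset.sup_inf_distrib_left]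
      apply Finset.sup_le
      intro T hT
      have hST : S ∪ T ∈ Finset.univ.powerset := Finset.mem_powerset.2 (Finset.subset_univ _)
      refine le_trans ?_ (Finset.le_sup hST)
      have h1 : p (eS T) ≤ p (eS (S ∪ T)) := poly_mono hp (eS_mono Finset.subset_union_right)
      have h2 : q (eS S) ≤ q (eS (S ∪ T)) := poly_mono hq (eS_mono Finset.subset_union_left)
      have h3 : (S ∪ T).inf (fun i => z i) = S.inf (fun i => z i) ⊓ T.inf (fun i => z i) :=
        Finset.inf_union
      rw [h3]
      refine le_inf (le_inf ?_ ?_) (le_inf ?_ ?_)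
      · exact le_trans inf_le_right (le_trans inf_le_left h1)
      · exact le_trans inf_le_left (le_trans inf_le_left h2)
      · exact le_trans inf_le_left inf_le_right
      · exact le_trans inf_le_right inf_le_right
    · apply Finset.sup_le
      intro S hS
      refine le_inf ?_ ?_
      · rw [ihp]
        exact le_trans (inf_le_inf_right _ inf_le_left)
          (Finset.le_sup (f := fun S : Finset (Fin n) => p (eS S) ⊓ S.inf fun i => z i) hS)
      · rw [ihq]
        exact le_trans (inf_le_inf_right _ inf_le_right)
          (Finset.le_sup (f := fun S : Finset (Fin n) => q (eS S) ⊓ S.inf fun i => z i) hS)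
  | sup hp hq ihp ihq =>
    rename_i p q
    beta_reduce
    have : (fun S : Finset (Fin n) => (p (eS S) ⊔ q (eS S)) ⊓ S.inf (fun i => z i))
        = fun S => (p (eS S) ⊓ S.inf (fun i => z i)) ⊔ (q (eS S) ⊓ S.inf (fun i => z i)) := by
      funext S; exact inf_sup_right _ _ _
    rw [ihp, ihq, this]
    exact (Finset.sup_sup).symm

end QPaux

namespace QPaux

lemma med_of_le {L : Type*} [Lattice L] {a b c : L} (hab : a ≤ b) (hbc : b ≤ c) :
    med a b c = b := by
  unfold med
  rw [inf_eq_left.mpr hab, inf_eq_left.mpr hbc, inf_eq_right.mpr (hab.trans hbc),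
    sup_eq_right.mpr hab, sup_eq_left.mpr hab]

section Main

variable {X Y : Type*} [DistribLattice X] [BoundedOrder X] [DistribLattice Y] [BoundedOrder Y]
  {n : ℕ} {f : (Fin n → X) → Y}

/-- quasi-median decomposability -/
def QMD (f : (Fin n → X) → Y) : Prop :=
  ∀ (x : Fin n → X) (k : Fin n),
    f x = f (Function.update x k ⊥) ⊔ (f (fun _ => x k) ⊓ f (Function.update x k ⊤))

lemma update_bot_le (x : Fin n → X) (k : Fin n) : Function.update x k ⊥ ≤ x := by
  intro i
  by_cases h : i = k
  · subst h; simp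
  · simp [Function.update_of_ne h]

lemma le_update_top (x : Fin n → X) (k : Fin n) : x ≤ Function.update x k ⊤ := by
  intro i
  by_cases h : i = k
  · subst h; simp
  · simp [Function.update_of_ne h]

/-- common final step -/
lemma qmd_combine (x : Fin n → X) (k : Fin n)
    (hax : f (Function.update x k ⊥) ≤ f x)
    (hbd : f (Function.update x k ⊤) ⊓ f (fun _ => x k) ≤ f x)
    (hxb : f x ≤ f (Function.update x k ⊤))
    (hxad : f x ≤ f (Function.update x k ⊥) ⊔ f (fun _ => x k)) :
    f x = f (Function.update x k ⊥) ⊔ (f (fun _ => x k) ⊓ f (Function.update x k ⊤)) := by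
  set a := f (Function.update x k ⊥)
  set b := f (Function.update x k ⊤)
  set d := f (fun _ => x k)
  have hab : a ≤ b := le_trans hax hxb
  apply le_antisymm
  · calc f x ≤ (a ⊔ d) ⊓ b := le_inf hxad hxb
      _ = (a ⊓ b) ⊔ (d ⊓ b) := inf_sup_right a d b
      _ = a ⊔ (d ⊓ b) := by rw [inf_eq_left.mpr hab]
  · exact sup_le hax (le_trans (le_of_eq (inf_comm _ _)) hbd)

lemma qmd_of_qih_qsh (hmono : Monotone f) (h1 : QuasiInfHomogeneous f)
    (h2 : QuasiSupHomogeneous f) : QMD f := by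
  intro x k
  apply qmd_combine x k
  · exact hmono (update_bot_le x k)
  · rw [← h1 (Function.update x k ⊤) (x k)]
    apply hmono
    intro i
    by_cases h : i = k
    · subst h; simp
    · simp [Function.update_of_ne h]
  · exact hmono (le_update_top x k)
  · rw [← h2 (Function.update x k ⊥) (x k)]
    apply hmono
    intro i
    by_cases h : i = k
    · subst h; simp
    · simp [Function.update_of_ne h]

lemma qmd_of_qih_hsd (hmono : Monotone f) (h1 : QuasiInfHomogeneous f)
    (h3 : HorizSupDecomposable f) : QMD f := by
  intro x k
  apply qmd_combine x k
  · exact hmono (update_bot_le x k)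
  · rw [← h1 (Function.update x k ⊤) (x k)]
    apply hmono
    intro i
    by_cases h : i = k
    · subst h; simp
    · simp [Function.update_of_ne h]
  · exact hmono (le_update_top x k)
  · rw [h3 x (x k)]
    apply sup_le
    · refine le_trans (hmono ?_) le_sup_right
      intro i; exact inf_le_right
    · refine le_trans (hmono ?_) le_sup_left
      intro i
      by_cases h : i = k
      · subst h; simp
      · by_cases hxc : x i ≤ x k
        · simp [hxc, Function.update_of_ne h]
        · simp [hxc, Function.update_of_ne h]

lemma qmd_of_hid_qsh (hmono : Monotone f) (h4 : HorizInfDecomposable f)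
    (h2 : QuasiSupHomogeneous f) : QMD f := by
  intro x k
  apply qmd_combine x k
  · exact hmono (update_bot_le x k)
  · rw [h4 x (x k)]
    refine le_inf ?_ ?_
    · refine le_trans inf_le_right (hmono ?_)
      intro i; exact le_sup_right
    · refine le_trans inf_le_left (hmono ?_)
      intro i
      by_cases h : i = k
      · subst h; simp
      · by_cases hxc : x k ≤ x i
        · simp [hxc, Function.update_of_ne h]
        · simp [hxc, Function.update_of_ne h]
  · exact hmono (le_update_top x k)
  · rw [← h2 (Function.update x k ⊥) (x k)]
    apply hmono
    intro i
    by_cases h : i = k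
    · subst h; simp
    · simp [Function.update_of_ne h]


section Rep

/-- partially-resolved tuple -/
noncomputable def yK (K S : Finset (Fin n)) (x : Fin n → X) : Fin n → X :=
  fun i => if i ∈ S then ⊤ else if i ∈ K then ⊥ else x i

lemma rep_aux (hqmd : QMD f) (x : Fin n → X) (K : Finset (Fin n)) :
    f x = K.powerset.sup
      (fun S => f (yK K S x) ⊓ S.inf (fun i => f (fun _ => x i))) := by
  classical
  induction K using Finset.induction with
  | empty =>
    rw [Finset.powerset_empty, Finset.sup_singleton]
    have h1 : yK (∅ : Finset (Fin n)) ∅ x = x := by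
      funext i; simp [yK]
    rw [h1]
    simp
  | @insert a K ha ih =>
    rw [Finset.powerset_insert, Finset.sup_union, Finset.sup_image, ← Finset.sup_sup, ih]
    apply Finset.sup_congr rfl
    intro S hS
    have hSK : S ⊆ K := Finset.mem_powerset.mp hS
    have haS : a ∉ S := fun h => ha (hSK h)
    have hya : yK K S x a = x a := by simp [yK, haS, ha]
    have hbot : Function.update (yK K S x) a ⊥ = yK (insert a K) S x := by
      funext i
      by_cases h : i = a
      · subst h; simp [yK, Function.update_self, haS]
      · simp [yK, Function.update_of_ne h, Finset.mem_insert, h]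
    have htop : Function.update (yK K S x) a ⊤ = yK (insert a K) (insert a S) x := by
      funext i
      by_cases h : i = a
      · subst h; simp [yK, Function.update_self]
      · simp [yK, Function.update_of_ne h, Finset.mem_insert, h]
    have hmins : (insert a S).inf (fun i => f (fun _ => x i))
        = f (fun _ => x a) ⊓ S.inf (fun i => f (fun _ => x i)) := Finset.inf_insert
    have hq := hqmd (yK K S x) a
    rw [hya, hbot, htop] at hq
    show f (yK K S x) ⊓ S.inf (fun i => f (fun _ => x i)) = _
    rw [hq, inf_sup_right]
    simp only [Pi.sup_apply, Function.comp_apply]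
    congr 1
    rw [hmins, inf_assoc, inf_left_comm]

lemma yK_univ (S : Finset (Fin n)) (x : Fin n → X) :
    yK Finset.univ S x = eS S := by
  funext i
  by_cases h : i ∈ S <;> simp [yK, eS, h]

lemma rep (hqmd : QMD f) (x : Fin n → X) :
    f x = Finset.univ.powerset.sup
      (fun S => f (eS S) ⊓ S.inf (fun i => f (fun _ => x i))) := by
  have := rep_aux hqmd x Finset.univ
  simpa only [yK_univ] using this

end Rep

lemma quasi_poly_of_qmd (hmono : Monotone f) (hqmd : QMD f) : IsQuasiPolynomial f := by
  classical
  refine ⟨fun z => Finset.univ.powerset.sup (fun S => f (eS S) ⊓ S.inf (fun i => z i)),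
    fun t => f (fun _ => t), ?_, ?_, ?_⟩
  · apply poly_finsetSup
    intro S _
    exact IsLatticePolynomial.inf (IsLatticePolynomial.const _) (poly_finsetInfProj S)
  · intro t
    refine (med_of_le (hmono ?_) (hmono ?_)).symm
    · intro i; exact bot_le
    · intro i; exact le_top
  · intro x
    exact rep hqmd x

/-- Claim 1: quasi-homogeneity implies horizontal sup-decomposability -/
lemma hsd_of_qih_qsh (hmono : Monotone f) (h1 : QuasiInfHomogeneous f)
    (h2 : QuasiSupHomogeneous f) : HorizSupDecomposable f := by
  intro x c
  set g : Fin n → X := fun i => if x i ≤ c then ⊥ else x i with hg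
  have hgx : f g ≤ f x := by
    apply hmono
    intro i
    by_cases h : x i ≤ c <;> simp [hg, h]
  have hid : (fun i => g i ⊔ c) = fun i => x i ⊔ c := by
    funext i
    by_cases h : x i ≤ c
    · simp [hg, h, sup_eq_right.mpr h]
    · simp [hg, h]
  have key2 : f g ⊔ f (fun _ => c) = f x ⊔ f (fun _ => c) := by
    rw [← h2 g c, ← h2 x c, hid]
  rw [h1 x c]
  calc f x = f x ⊓ (f x ⊔ f (fun _ => c)) := (inf_eq_left.mpr le_sup_left).symm
    _ = (f x ⊔ f g) ⊓ (f g ⊔ f (fun _ => c)) := by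
        rw [sup_eq_left.mpr hgx, key2]
    _ = (f x ⊓ f (fun _ => c)) ⊔ f g := by
        rw [sup_comm (f x) (f g), ← sup_inf_left, sup_comm]

/-- dual Claim 1 -/
lemma hid_of_qih_qsh (hmono : Monotone f) (h1 : QuasiInfHomogeneous f)
    (h2 : QuasiSupHomogeneous f) : HorizInfDecomposable f := by
  intro x c
  set u : Fin n → X := fun i => if c ≤ x i then ⊤ else x i with hu
  have hxu : f x ≤ f u := by
    apply hmono
    intro i
    by_cases h : c ≤ x i <;> simp [hu, h]
  have hid : (fun i => u i ⊓ c) = fun i => x i ⊓ c := by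
    funext i
    by_cases h : c ≤ x i
    · simp [hu, h, inf_eq_right.mpr h]
    · simp [hu, h]
  have key2 : f u ⊓ f (fun _ => c) = f x ⊓ f (fun _ => c) := by
    rw [← h1 u c, ← h1 x c, hid]
  rw [h2 x c]
  calc f x = f x ⊔ (f x ⊓ f (fun _ => c)) := (sup_eq_left.mpr inf_le_left).symm
    _ = (f x ⊓ f u) ⊔ (f u ⊓ f (fun _ => c)) := by
        rw [inf_eq_left.mpr hxu, key2]
    _ = (f x ⊔ f (fun _ => c)) ⊓ f u := by
        rw [inf_comm (f x) (f u), ← inf_sup_left, inf_comm]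


section P1

lemma infsup_le (S : Finset (Fin n)) (u : Fin n → Y) (m : Y) :
    S.inf (fun i => u i ⊔ m) ≤ S.inf u ⊔ m := by
  classical
  induction S using Finset.induction with
  | empty => simp
  | @insert a s ha ih =>
    rw [Finset.inf_insert, Finset.inf_insert]
    calc (u a ⊔ m) ⊓ s.inf (fun i => u i ⊔ m) ≤ (u a ⊔ m) ⊓ (s.inf u ⊔ m) :=
          inf_le_inf_left _ ih
      _ = (u a ⊓ s.inf u) ⊔ m := (sup_inf_right _ _ _).symm

lemma qih_qsh_of_qp (hn : 0 < n) (hmono : Monotone f)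
    (hhom : ∀ a b : X, f (fun _ => a ⊓ b) = f (fun _ => a) ⊓ f (fun _ => b) ∧
                       f (fun _ => a ⊔ b) = f (fun _ => a) ⊔ f (fun _ => b))
    (hqp : IsQuasiPolynomial f) : QuasiInfHomogeneous f ∧ QuasiSupHomogeneous f := by
  classical
  obtain ⟨p, φ, hp, hmed, hf⟩ := hqp
  set A : Finset (Fin n) → Y := fun S => p (eS S) with hA
  set F : (Fin n → Y) → Y :=
    fun u => Finset.univ.powerset.sup (fun S => A S ⊓ S.inf (fun i => u i)) with hF
  have hFf : ∀ x : Fin n → X, f x = F (fun i => φ (x i)) :=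
    fun x => (hf x).trans (goodstein hp _)
  have hAmono : ∀ S : Finset (Fin n), A S ≤ A Finset.univ :=
    fun S => poly_mono hp (eS_mono (Finset.subset_univ S))
  have hNuniv : (Finset.univ : Finset (Fin n)).Nonempty := ⟨⟨0, hn⟩, Finset.mem_univ _⟩
  have hbotF : ∀ u : Fin n → Y, A ∅ ≤ F u := by
    intro u
    have := Finset.le_sup (f := fun S : Finset (Fin n) => A S ⊓ S.inf (fun i => u i))
      (Finset.empty_mem_powerset (Finset.univ : Finset (Fin n)))
    simpa [hF] using this
  have hdelta : ∀ t : X, f (fun _ => t) = A ∅ ⊔ (A Finset.univ ⊓ φ t) := by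
    intro t
    rw [hFf (fun _ => t)]
    apply le_antisymm
    · apply Finset.sup_le
      intro S hS
      rcases S.eq_empty_or_nonempty with h | h
      · subst h; simpa using le_sup_left
      · rw [Finset.inf_const h]
        exact le_trans (inf_le_inf_right _ (hAmono S)) le_sup_right
    · apply sup_le (hbotF _)
      have h2 : A Finset.univ ⊓ (Finset.univ : Finset (Fin n)).inf (fun _ => φ t)
          = A Finset.univ ⊓ φ t := by rw [Finset.inf_const hNuniv]
      rw [← h2]
      exact Finset.le_sup (f := fun S : Finset (Fin n) => A S ⊓ S.inf (fun _ => φ t))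
        (Finset.mem_powerset.mpr (Finset.subset_univ _))
  have hsub_le : ∀ u v : Fin n → Y,
      (∀ i, A ∅ ⊔ (A Finset.univ ⊓ u i) = A ∅ ⊔ (A Finset.univ ⊓ v i)) → F u ≤ F v := by
    intro u v h
    apply Finset.sup_le
    intro S hS
    have step1 : ∀ w : Fin n → Y,
        A S ⊓ S.inf (fun i => w i) = A S ⊓ S.inf (fun i => A Finset.univ ⊓ w i) := by
      intro w
      apply le_antisymm
      · refine le_inf inf_le_left (Finset.le_inf ?_)
        intro i hi
        exact le_inf (le_trans inf_le_left (hAmono S)) (le_trans inf_le_right (Finset.inf_le hi))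
      · exact inf_le_inf_left _ (Finset.inf_mono_fun (fun i _ => inf_le_right))
    have step2 : ∀ w : Fin n → Y, A ∅ ⊔ (A S ⊓ S.inf (fun i => A Finset.univ ⊓ w i))
        = (A ∅ ⊔ A S) ⊓ S.inf (fun i => A ∅ ⊔ (A Finset.univ ⊓ w i)) := by
      intro w
      rw [sup_inf_left, Finset.inf_sup_distrib_left]
    have key : A ∅ ⊔ (A S ⊓ S.inf (fun i => u i)) = A ∅ ⊔ (A S ⊓ S.inf (fun i => v i)) := by
      rw [step1 u, step2 u, funext h, ← step2 v, ← step1 v]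
    calc A S ⊓ S.inf (fun i => u i) ≤ A ∅ ⊔ (A S ⊓ S.inf (fun i => u i)) := le_sup_right
      _ = A ∅ ⊔ (A S ⊓ S.inf (fun i => v i)) := key
      _ ≤ F v := sup_le (hbotF v)
          (Finset.le_sup (f := fun S : Finset (Fin n) => A S ⊓ S.inf (fun i => v i)) hS)
  have hsub : ∀ u v : Fin n → Y,
      (∀ i, A ∅ ⊔ (A Finset.univ ⊓ u i) = A ∅ ⊔ (A Finset.univ ⊓ v i)) → F u = F v :=
    fun u v h => le_antisymm (hsub_le u v h) (hsub_le v u (fun i => (h i).symm))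
  have hFmeet : ∀ (u : Fin n → Y) (m : Y),
      F (fun i => u i ⊓ m) = F u ⊓ (A ∅ ⊔ (A Finset.univ ⊓ m)) := by
    intro u m
    apply le_antisymm
    · apply Finset.sup_le
      intro S hS
      refine le_inf ?_ ?_
      · refine le_trans ?_
          (Finset.le_sup (f := fun S : Finset (Fin n) => A S ⊓ S.inf (fun i => u i)) hS)
        exact inf_le_inf_left _ (Finset.inf_mono_fun fun i _ => inf_le_left)
      · rcases S.eq_empty_or_nonempty with h | h
        · subst h; simpa using le_sup_left
        · obtain ⟨j, hj⟩ := h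
          refine le_trans ?_ le_sup_right
          refine le_inf (le_trans inf_le_left (hAmono S)) ?_
          exact le_trans inf_le_right (le_trans (Finset.inf_le hj) inf_le_right)
    · rw [inf_sup_left]
      apply sup_le
      · exact le_trans inf_le_right (hbotF _)
      · rw [inf_comm, hF]
        rw [Finset.sup_inf_distrib_left]
        apply Finset.sup_le
        intro S hS
        refine le_trans ?_
          (Finset.le_sup (f := fun S : Finset (Fin n) => A S ⊓ S.inf (fun i => u i ⊓ m)) hS)
        refine le_inf (le_trans inf_le_right inf_le_left) (Finset.le_inf ?_)
        intro i hi
        refine le_inf ?_ (le_trans inf_le_left inf_le_right)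
        exact le_trans inf_le_right (le_trans inf_le_right (Finset.inf_le hi))
  have hFjoin : ∀ (u : Fin n → Y) (m : Y),
      F (fun i => u i ⊔ m) = F u ⊔ (A Finset.univ ⊓ m) := by
    intro u m
    apply le_antisymm
    · apply Finset.sup_le
      intro S hS
      calc A S ⊓ S.inf (fun i => u i ⊔ m) ≤ A S ⊓ (S.inf (fun i => u i) ⊔ m) :=
            inf_le_inf_left _ (infsup_le S u m)
        _ = (A S ⊓ S.inf (fun i => u i)) ⊔ (A S ⊓ m) := inf_sup_left _ _ _
        _ ≤ F u ⊔ (A Finset.univ ⊓ m) := sup_le_sup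
            (Finset.le_sup (f := fun S : Finset (Fin n) => A S ⊓ S.inf (fun i => u i)) hS)
            (inf_le_inf_right _ (hAmono S))
    · apply sup_le
      · apply Finset.sup_le
        intro S hS
        refine le_trans ?_
          (Finset.le_sup (f := fun S : Finset (Fin n) => A S ⊓ S.inf (fun i => u i ⊔ m)) hS)
        exact inf_le_inf_left _ (Finset.inf_mono_fun fun i _ => le_sup_left)
      · refine le_trans ?_
          (Finset.le_sup (f := fun S : Finset (Fin n) => A S ⊓ S.inf (fun i => u i ⊔ m))
            (Finset.mem_powerset.mpr (Finset.subset_univ (Finset.univ : Finset (Fin n)))))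
        exact le_inf inf_le_left (Finset.le_inf fun i _ => le_trans inf_le_right le_sup_right)
  constructor
  · intro x c
    have heq : ∀ i, A ∅ ⊔ (A Finset.univ ⊓ φ (x i ⊓ c))
        = A ∅ ⊔ (A Finset.univ ⊓ (φ (x i) ⊓ φ c)) := by
      intro i
      have h1 := hdelta (x i ⊓ c)
      have h2 := (hhom (x i) c).1
      rw [hdelta (x i), hdelta c, h1] at h2
      rw [h2, ← sup_inf_left]
      congr 1
      exact (inf_inf_distrib_left _ _ _).symm
    calc f (fun i => x i ⊓ c) = F (fun i => φ (x i ⊓ c)) := hFf _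
      _ = F (fun i => φ (x i) ⊓ φ c) := hsub _ _ heq
      _ = F (fun i => φ (x i)) ⊓ (A ∅ ⊔ (A Finset.univ ⊓ φ c)) := hFmeet _ _
      _ = f x ⊓ f (fun _ => c) := by rw [← hdelta c, hFf x]
  · intro x c
    have heq : ∀ i, A ∅ ⊔ (A Finset.univ ⊓ φ (x i ⊔ c))
        = A ∅ ⊔ (A Finset.univ ⊓ (φ (x i) ⊔ φ c)) := by
      intro i
      have h1 := hdelta (x i ⊔ c)
      have h2 := (hhom (x i) c).2
      rw [hdelta (x i), hdelta c, h1] at h2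
      rw [h2, inf_sup_left, sup_sup_sup_comm, sup_idem]
    calc f (fun i => x i ⊔ c) = F (fun i => φ (x i ⊔ c)) := hFf _
      _ = F (fun i => φ (x i) ⊔ φ c) := hsub _ _ heq
      _ = F (fun i => φ (x i)) ⊔ (A Finset.univ ⊓ φ c) := hFjoin _ _
      _ = f x ⊔ f (fun _ => c) := by
          rw [hFf x, hdelta c]
          apply le_antisymm
          · exact sup_le le_sup_left (le_trans le_sup_right le_sup_right)
          · exact sup_le le_sup_left (sup_le (le_trans (hbotF _) le_sup_left) le_sup_right)

end P1

end Main

end QPaux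

theorem statement_6 {X Y : Type*} [DistribLattice X] [BoundedOrder X]
    [DistribLattice Y] [BoundedOrder Y] {n : ℕ} (hn : 0 < n)
    (f : (Fin n → X) → Y) (hmono : Monotone f)
    (hhom : ∀ a b : X, f (fun _ => a ⊓ b) = f (fun _ => a) ⊓ f (fun _ => b) ∧
                       f (fun _ => a ⊔ b) = f (fun _ => a) ⊔ f (fun _ => b)) :
    (IsQuasiPolynomial f ↔ QuasiInfHomogeneous f ∧ QuasiSupHomogeneous f) ∧
    (IsQuasiPolynomial f ↔ QuasiInfHomogeneous f ∧ HorizSupDecomposable f) ∧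
    (IsQuasiPolynomial f ↔ HorizInfDecomposable f ∧ QuasiSupHomogeneous f) := by
  have hp1 : IsQuasiPolynomial f → QuasiInfHomogeneous f ∧ QuasiSupHomogeneous f :=
    QPaux.qih_qsh_of_qp hn hmono hhom
  refine ⟨⟨hp1, fun ⟨h1, h2⟩ => QPaux.quasi_poly_of_qmd hmono (QPaux.qmd_of_qih_qsh hmono h1 h2)⟩,
    ⟨fun h => ?_,
      fun ⟨h1, h3⟩ => QPaux.quasi_poly_of_qmd hmono (QPaux.qmd_of_qih_hsd hmono h1 h3)⟩,
    ⟨fun h => ?_,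
      fun ⟨h4, h2⟩ => QPaux.quasi_poly_of_qmd hmono (QPaux.qmd_of_hid_qsh hmono h4 h2)⟩⟩
  · obtain ⟨h1, h2⟩ := hp1 h
    exact ⟨h1, QPaux.hsd_of_qih_qsh hmono h1 h2⟩
  · obtain ⟨h1, h2⟩ := hp1 h
    exact ⟨QPaux.hid_of_qih_qsh hmono h1 h2, h2⟩
end

section
/- Let X be a bounded distributive lattice, Y a bounded chain, and f : Xⁿ → Y an order-preserving function whose diagonal section δ_f is a lattice homomorphism. Then f is a quasi-polynomial function if and only if it is quasi-comonotonic minitive and quasi-comonotonic maxitive. -/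
section SugHelpers

open Finset

variable {Y : Type*} [LinearOrder Y] [BoundedOrder Y] {n : ℕ}

/-- Sugeno-type lattice polynomial defined by a set function `w`. -/
def sug (w : Finset (Fin n) → Y) (y : Fin n → Y) : Y :=
  (Finset.univ : Finset (Fin n)).powerset.sup fun S => w S ⊓ S.inf y

lemma term_le_sug (w : Finset (Fin n) → Y) (y : Fin n → Y) (S : Finset (Fin n)) :
    w S ⊓ S.inf y ≤ sug w y :=
  Finset.le_sup (f := fun S => w S ⊓ S.inf y) (Finset.mem_powerset.mpr (Finset.subset_univ S))

lemma sug_le {w : Finset (Fin n) → Y} {y : Fin n → Y} {a : Y}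
    (h : ∀ S : Finset (Fin n), w S ⊓ S.inf y ≤ a) : sug w y ≤ a :=
  Finset.sup_le fun S _ => h S

lemma attain (σ : Equiv.Perm (Fin n)) {S : Finset (Fin n)} (hS : S.Nonempty) :
    ∃ k : Fin n, σ k ∈ S ∧ ∀ i ∈ S, k ≤ σ.symm i := by
  have hne : (S.image σ.symm).Nonempty := hS.image _
  refine ⟨(S.image σ.symm).min' hne, ?_, ?_⟩
  · obtain ⟨i, hi, hik⟩ := Finset.mem_image.mp ((S.image σ.symm).min'_mem hne)
    rw [← hik]
    simpa using hi
  · intro i hi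
    exact Finset.min'_le _ _ (Finset.mem_image_of_mem _ hi)

lemma inf_eq_attain {σ : Equiv.Perm (Fin n)} {y : Fin n → Y} (hy : Monotone (fun i => y (σ i)))
    {S : Finset (Fin n)} {k : Fin n} (hk : σ k ∈ S) (hk2 : ∀ i ∈ S, k ≤ σ.symm i) :
    S.inf y = y (σ k) := by
  refine le_antisymm (Finset.inf_le hk) (Finset.le_inf fun i hi => ?_)
  have := hy (hk2 i hi)
  simpa using this

lemma finset_inf_inf {α β : Type*} [Lattice α] [OrderTop α] (S : Finset β) (y y' : β → α) :
    S.inf (fun i => y i ⊓ y' i) = S.inf y ⊓ S.inf y' :=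
  le_antisymm
    (le_inf (Finset.le_inf fun i hi => (Finset.inf_le hi).trans inf_le_left)
      (Finset.le_inf fun i hi => (Finset.inf_le hi).trans inf_le_right))
    (Finset.le_inf fun i hi => inf_le_inf (Finset.inf_le hi) (Finset.inf_le hi))

/-- cross-term bound, used with `U = S`. -/
lemma sug_cross {w : Finset (Fin n) → Y} {y y' : Fin n → Y} {S T : Finset (Fin n)}
    (h : w T ⊓ T.inf y' ≤ S.inf y') :
    (w S ⊓ S.inf y) ⊓ (w T ⊓ T.inf y') ≤ sug w (fun i => y i ⊓ y' i) := by
  refine le_trans ?_ (term_le_sug w _ S)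
  rw [finset_inf_inf]
  exact le_inf (inf_le_left.trans inf_le_left)
    (le_inf (inf_le_left.trans inf_le_right) (inf_le_right.trans h))

/-- cross-term bound, used with `U = T`. -/
lemma sug_cross' {w : Finset (Fin n) → Y} {y y' : Fin n → Y} {S T : Finset (Fin n)}
    (h : w S ⊓ S.inf y ≤ T.inf y) :
    (w S ⊓ S.inf y) ⊓ (w T ⊓ T.inf y') ≤ sug w (fun i => y i ⊓ y' i) := by
  refine le_trans ?_ (term_le_sug w _ T)
  rw [finset_inf_inf]
  exact le_inf (inf_le_right.trans inf_le_left)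
    (le_inf (inf_le_left.trans h) (inf_le_right.trans inf_le_right))

lemma sug_inf_comono {w : Finset (Fin n) → Y} (hw : Monotone w) (σ : Equiv.Perm (Fin n))
    {y y' : Fin n → Y} (hy : Monotone (fun i => y (σ i))) (hy' : Monotone (fun i => y' (σ i)))
    (h0 : ∀ i, w ∅ ≤ y i) (h0' : ∀ i, w ∅ ≤ y' i) :
    sug w (fun i => y i ⊓ y' i) = sug w y ⊓ sug w y' := by
  refine le_antisymm (le_inf (sug_le fun S => ?_) (sug_le fun S => ?_)) ?_
  · refine le_trans (inf_le_inf_left _ ?_) (term_le_sug w y S)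
    rw [finset_inf_inf]; exact inf_le_left
  · refine le_trans (inf_le_inf_left _ ?_) (term_le_sug w y' S)
    rw [finset_inf_inf]; exact inf_le_right
  · have expand : sug w y ⊓ sug w y' =
        (Finset.univ : Finset (Fin n)).powerset.sup fun S =>
          (Finset.univ : Finset (Fin n)).powerset.sup fun T =>
            (w S ⊓ S.inf y) ⊓ (w T ⊓ T.inf y') := by
      rw [sug, sug, Finset.sup_inf_distrib_right]
      exact Finset.sup_congr rfl fun S _ => Finset.sup_inf_distrib_left _ _ _
    rw [expand]
    refine Finset.sup_le fun S _ => Finset.sup_le fun T _ => ?_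
    rcases S.eq_empty_or_nonempty with rfl | hS
    · rcases T.eq_empty_or_nonempty with rfl | hT
      · exact sug_cross le_top
      · -- U = T : need w ∅ ⊓ inf ∅ y ≤ T.inf y
        refine sug_cross' (Finset.le_inf fun i hi => inf_le_left.trans (h0 i))
    · rcases T.eq_empty_or_nonempty with rfl | hT
      · exact sug_cross (Finset.le_inf fun i hi => inf_le_left.trans (h0' i))
      · obtain ⟨k, hkS, hkS2⟩ := attain σ hS
        obtain ⟨l, hlT, hlT2⟩ := attain σ hT
        rcases le_total l k with hlk | hkl
        · -- U = S : w T ⊓ T.inf y' ≤ S.inf y'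
          refine sug_cross (Finset.le_inf fun i hi => ?_)
          have h1 : T.inf y' ≤ y' (σ l) := Finset.inf_le hlT
          have h2 : y' (σ l) ≤ y' (σ k) := hy' hlk
          have h3 : y' (σ k) ≤ y' i := by
            have := hy' (hkS2 i hi); simpa using this
          exact inf_le_right.trans (h1.trans (h2.trans h3))
        · -- U = T : w S ⊓ S.inf y ≤ T.inf y
          refine sug_cross' (Finset.le_inf fun i hi => ?_)
          have h1 : S.inf y ≤ y (σ k) := Finset.inf_le hkS
          have h2 : y (σ k) ≤ y (σ l) := hy hkl
          have h3 : y (σ l) ≤ y i := by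
            have := hy (hlT2 i hi); simpa using this
          exact inf_le_right.trans (h1.trans (h2.trans h3))

lemma sug_sup_comono {w : Finset (Fin n) → Y} (σ : Equiv.Perm (Fin n))
    {y y' : Fin n → Y} (hy : Monotone (fun i => y (σ i))) (hy' : Monotone (fun i => y' (σ i))) :
    sug w (fun i => y i ⊔ y' i) = sug w y ⊔ sug w y' := by
  refine le_antisymm (sug_le fun S => ?_) (sup_le ?_ ?_)
  · rcases S.eq_empty_or_nonempty with rfl | hS
    · refine le_trans ?_ (le_sup_left.trans' (term_le_sug w y ∅))
      simp
    · obtain ⟨k, hkS, hkS2⟩ := attain σ hS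
      have e1 : S.inf y = y (σ k) := inf_eq_attain hy hkS hkS2
      have e2 : S.inf y' = y' (σ k) := inf_eq_attain hy' hkS hkS2
      have e3 : S.inf (fun i => y i ⊔ y' i) = y (σ k) ⊔ y' (σ k) :=
        inf_eq_attain (hy.sup hy') hkS hkS2
      rw [e3, inf_sup_left]
      refine sup_le_sup ?_ ?_
      · rw [← e1]; exact term_le_sug w y S
      · rw [← e2]; exact term_le_sug w y' S
  · exact sug_le fun S => le_trans
      (inf_le_inf_left _ (Finset.le_inf fun i hi => (Finset.inf_le hi).trans le_sup_left))
      (term_le_sug w (fun i => y i ⊔ y' i) S)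
  · exact sug_le fun S => le_trans
      (inf_le_inf_left _ (Finset.le_inf fun i hi => (Finset.inf_le hi).trans le_sup_right))
      (term_le_sug w (fun i => y i ⊔ y' i) S)

end SugHelpers
section DNF

variable {Y : Type*} [LinearOrder Y] [BoundedOrder Y] {n : ℕ}

lemma isPoly_finsetSup {L : Type*} [DistribLattice L] [BoundedOrder L] {β : Type*}
    (s : Finset β) (g : β → (Fin n → L) → L)
    (h : ∀ b ∈ s, IsLatticePolynomial (g b)) :
    IsLatticePolynomial (fun y => s.sup fun b => g b y) := by
  classical
  revert h
  induction s using Finset.cons_induction with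
  | empty => intro _; simpa using IsLatticePolynomial.const (⊥ : L)
  | cons a s ha ih =>
      intro h
      simp only [Finset.sup_cons]
      exact .sup (h a (Finset.mem_cons_self a s))
        (ih fun b hb => h b (Finset.mem_cons.mpr (Or.inr hb)))

lemma isPoly_finsetInf {L : Type*} [DistribLattice L] [BoundedOrder L]
    (S : Finset (Fin n)) :
    IsLatticePolynomial (fun y : Fin n → L => S.inf y) := by
  induction S using Finset.cons_induction with
  | empty => simpa using IsLatticePolynomial.const (⊤ : L)
  | cons a s ha ih =>
      simp only [Finset.inf_cons]
      exact .inf (.proj a) ih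

lemma isPoly_sug (w : Finset (Fin n) → Y) : IsLatticePolynomial (sug w) :=
  isPoly_finsetSup _ _ fun S _ => .inf (.const (w S)) (isPoly_finsetInf S)

lemma dnf {p : (Fin n → Y) → Y} (hp : IsLatticePolynomial p) :
    ∃ w : Finset (Fin n) → Y, Monotone w ∧ ∀ y, p y = sug w y := by
  induction hp with
  | proj i =>
      refine ⟨fun S => if i ∈ S then ⊤ else ⊥, ?_, fun y => le_antisymm ?_ (sug_le fun S => ?_)⟩
      · intro S T hST
        by_cases h : i ∈ S
        · simp [h, hST h]
        · simp [h]
      · refine le_trans ?_ (term_le_sug _ y {i})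
        simp
      · by_cases h : i ∈ S
        · simp only [if_pos h]
          exact inf_le_right.trans (Finset.inf_le h)
        · simp [h]
  | const c =>
      refine ⟨fun _ => c, monotone_const, fun y => le_antisymm ?_ (sug_le fun S => inf_le_left)⟩
      refine le_trans ?_ (term_le_sug _ y ∅)
      simp
  | inf hp hq ihp ihq =>
      obtain ⟨w₁, hw₁, h₁⟩ := ihp
      obtain ⟨w₂, hw₂, h₂⟩ := ihq
      refine ⟨fun S => w₁ S ⊓ w₂ S, fun S T hST => inf_le_inf (hw₁ hST) (hw₂ hST),
        fun y => ?_⟩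
      simp only [h₁, h₂]
      refine le_antisymm ?_ (sug_le fun S => ?_)
      · have expand : sug w₁ y ⊓ sug w₂ y =
            (Finset.univ : Finset (Fin n)).powerset.sup fun S =>
              (Finset.univ : Finset (Fin n)).powerset.sup fun T =>
                (w₁ S ⊓ S.inf y) ⊓ (w₂ T ⊓ T.inf y) := by
          rw [sug, sug, Finset.sup_inf_distrib_right]
          exact Finset.sup_congr rfl fun S _ => Finset.sup_inf_distrib_left _ _ _
        rw [expand]
        refine Finset.sup_le fun S _ => Finset.sup_le fun T _ => ?_
        refine le_trans ?_ (term_le_sug (fun S => w₁ S ⊓ w₂ S) y (S ∪ T))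
        rw [Finset.inf_union]
        refine le_inf (le_inf ?_ ?_) (le_inf ?_ ?_)
        · exact inf_le_left.trans (inf_le_left.trans (hw₁ Finset.subset_union_left))
        · exact inf_le_right.trans (inf_le_left.trans (hw₂ Finset.subset_union_right))
        · exact inf_le_left.trans inf_le_right
        · exact inf_le_right.trans inf_le_right
      · refine le_inf (le_trans ?_ (term_le_sug w₁ y S)) (le_trans ?_ (term_le_sug w₂ y S))
        · exact inf_le_inf_right _ inf_le_left
        · exact inf_le_inf_right _ inf_le_right
  | sup hp hq ihp ihq =>
      obtain ⟨w₁, hw₁, h₁⟩ := ihp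
      obtain ⟨w₂, hw₂, h₂⟩ := ihq
      refine ⟨fun S => w₁ S ⊔ w₂ S, fun S T hST => sup_le_sup (hw₁ hST) (hw₂ hST),
        fun y => ?_⟩
      simp only [h₁, h₂]
      refine le_antisymm (sup_le ?_ ?_) (sug_le fun S => ?_)
      · exact sug_le fun S => le_trans (inf_le_inf_right _ le_sup_left)
          (term_le_sug (fun S => w₁ S ⊔ w₂ S) y S)
      · exact sug_le fun S => le_trans (inf_le_inf_right _ le_sup_right)
          (term_le_sug (fun S => w₁ S ⊔ w₂ S) y S)
      · rw [inf_sup_right]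
        exact sup_le ((term_le_sug w₁ y S).trans le_sup_left)
          ((term_le_sug w₂ y S).trans le_sup_right)

lemma sug_const {w : Finset (Fin n) → Y} (hw : Monotone w) (hn : 0 < n) (t : Y) :
    sug w (fun _ => t) = w ∅ ⊔ (t ⊓ w Finset.univ) := by
  have hne : Nonempty (Fin n) := ⟨⟨0, hn⟩⟩
  refine le_antisymm (sug_le fun S => ?_) (sup_le ?_ ?_)
  · rcases S.eq_empty_or_nonempty with rfl | hS
    · simp
    · rw [Finset.inf_const hS]
      exact le_sup_of_le_right (le_inf inf_le_right
        (inf_le_left.trans (hw (Finset.subset_univ S))))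
  · refine le_trans ?_ (term_le_sug w _ ∅); simp
  · refine le_trans ?_ (term_le_sug w _ Finset.univ)
    rw [Finset.inf_const Finset.univ_nonempty, inf_comm]
lemma sug_clamp {w : Finset (Fin n) → Y} (hw : Monotone w) (z : Fin n → Y) :
    sug w (fun i => w ∅ ⊔ (z i ⊓ w Finset.univ)) = sug w z := by
  refine le_antisymm (sug_le fun S => ?_) (sug_le fun S => ?_)
  · rcases S.eq_empty_or_nonempty with rfl | hS
    · refine le_trans ?_ (term_le_sug w z ∅); simp
    · have h1 : S.inf (fun i => w ∅ ⊔ (z i ⊓ w Finset.univ))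
          = w ∅ ⊔ (S.inf z ⊓ w Finset.univ) := by
        rw [← Finset.inf_sup_distrib_left, finset_inf_inf, Finset.inf_const hS]
      rw [h1, inf_sup_left]
      refine sup_le ?_ ?_
      · refine le_trans inf_le_right (le_trans ?_ (term_le_sug w z ∅)); simp
      · exact le_trans (inf_le_inf_left _ inf_le_left) (term_le_sug w z S)
  · refine le_trans ?_ (term_le_sug w _ S)
    refine le_inf inf_le_left (Finset.le_inf fun i hi => ?_)
    exact le_sup_of_le_right (le_inf (inf_le_right.trans (Finset.inf_le hi))
      (inf_le_left.trans (hw (Finset.subset_univ S))))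

end DNF
section Repr

variable {X Y : Type*} [DistribLattice X] [BoundedOrder X]
  [LinearOrder Y] [BoundedOrder Y] {n : ℕ}

lemma delta_inf' (f : (Fin n → X) → Y)
    (hhom : ∀ a b : X, f (fun _ => a ⊓ b) = f (fun _ => a) ⊓ f (fun _ => b))
    {β : Type*} {S : Finset β} (hS : S.Nonempty) (x : β → X) :
    f (fun _ => S.inf' hS x) = S.inf' hS (fun i => f (fun _ => x i)) := by
  induction hS using Finset.Nonempty.cons_induction with
  | singleton a => simp
  | cons a s ha hs ih => rw [Finset.inf'_cons (H := hs), Finset.inf'_cons (H := hs), hhom, ih]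

lemma delta_sup' (f : (Fin n → X) → Y)
    (hhom : ∀ a b : X, f (fun _ => a ⊔ b) = f (fun _ => a) ⊔ f (fun _ => b))
    {β : Type*} {S : Finset β} (hS : S.Nonempty) (x : β → X) :
    f (fun _ => S.sup' hS x) = S.sup' hS (fun i => f (fun _ => x i)) := by
  induction hS using Finset.Nonempty.cons_induction with
  | singleton a => simp
  | cons a s ha hs ih => rw [Finset.sup'_cons (H := hs), Finset.sup'_cons (H := hs), hhom, ih]

theorem repr_main (f : (Fin n → X) → Y) (hmono : Monotone f)
    (hhom : ∀ a b : X, f (fun _ => a ⊓ b) = f (fun _ => a) ⊓ f (fun _ => b) ∧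
                       f (fun _ => a ⊔ b) = f (fun _ => a) ⊔ f (fun _ => b))
    (hmin : ∀ (σ : Equiv.Perm (Fin n)) (x x' : Fin n → X),
          Monotone (fun i => f (fun _ => x (σ i))) →
          Monotone (fun i => f (fun _ => x' (σ i))) →
          f (x ⊓ x') = f x ⊓ f x')
    (hmax : ∀ (σ : Equiv.Perm (Fin n)) (x x' : Fin n → X),
          Monotone (fun i => f (fun _ => x (σ i))) →
          Monotone (fun i => f (fun _ => x' (σ i))) →
          f (x ⊔ x') = f x ⊔ f x')
    (x : Fin n → X) :
    f x = sug (fun S => f (fun i => if i ∈ S then ⊤ else ⊥)) (fun i => f (fun _ => x i)) := by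
  set w : Finset (Fin n) → Y := fun S => f (fun i => if i ∈ S then ⊤ else ⊥) with hwdef
  have hwe : w ∅ = f (fun _ => (⊥ : X)) := by
    rw [hwdef]
    exact congrArg f (funext fun i => by simp)
  have hwesug : w ∅ ≤ sug w (fun i => f (fun _ => x i)) := by
    refine le_trans ?_ (term_le_sug w _ ∅); simp
  refine le_antisymm ?_ (sug_le fun S => ?_)
  · -- f x ≤ sug w (δ ∘ x)
    set σ := Tuple.sort (fun i => f (fun _ => x i)) with hσdef
    have hy : Monotone (fun i => f (fun _ => x (σ i))) :=
      fun a b h => Tuple.monotone_sort (fun i => f (fun _ => x i)) h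
    set M : ℕ → X := fun k =>
      (Finset.univ.filter fun j : Fin n => ((σ.symm j : Fin n) : ℕ) < k).sup x with hMdef
    set B : ℕ → Finset (Fin n) := fun k =>
      Finset.univ.filter fun j : Fin n => k ≤ ((σ.symm j : Fin n) : ℕ) with hBdef
    set u : ℕ → Fin n → X := fun k j =>
      if k ≤ ((σ.symm j : Fin n) : ℕ) then ⊤ else M k with hudef
    have hxu : ∀ k, x ≤ u k := by
      intro k
      rw [Pi.le_def]
      intro j
      by_cases h : k ≤ ((σ.symm j : Fin n) : ℕ)
      · simp [hudef, h]
      · simp only [hudef, if_neg h]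
        exact Finset.le_sup (Finset.mem_filter.mpr ⟨Finset.mem_univ _, by omega⟩)
    have hfu : ∀ k, f (u k) = w (B k) ⊔ f (fun _ => M k) := by
      intro k
      have hcomp : u k = (fun i => if i ∈ B k then (⊤ : X) else ⊥) ⊔ (fun _ => M k) := by
        funext j
        have hmem : j ∈ B k ↔ k ≤ ((σ.symm j : Fin n) : ℕ) := by simp [hBdef]
        by_cases h : k ≤ ((σ.symm j : Fin n) : ℕ)
        · simp [hudef, h, hmem]
        · simp [hudef, h, hmem]
      have hsort1 : Monotone fun i : Fin n =>
          f (fun _ => if σ i ∈ B k then (⊤ : X) else ⊥) := by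
        have hmem : ∀ i : Fin n, (σ i ∈ B k) ↔ k ≤ (i : ℕ) := by
          intro i; simp [hBdef]
        intro a b hab
        simp only
        by_cases haa : k ≤ (a : ℕ)
        · have hbb : k ≤ (b : ℕ) := le_trans haa hab
          rw [if_pos ((hmem a).mpr haa), if_pos ((hmem b).mpr hbb)]
        · rw [if_neg (fun h => haa ((hmem a).mp h))]
          exact hmono fun i => bot_le
      have happ := hmax σ (fun i => if i ∈ B k then (⊤ : X) else ⊥) (fun _ => M k)
        hsort1 monotone_const
      rw [hcomp, happ, hwdef]
    have hL : f x ≤ (Finset.range (n + 1)).inf fun k => w (B k) ⊔ f (fun _ => M k) :=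
      Finset.le_inf fun k _ => (hfu k) ▸ hmono (hxu k)
    have hMzero : M 0 = ⊥ := by
      rw [hMdef]
      simp
    have hBn : B n = ∅ := by
      rw [hBdef]
      refine Finset.filter_false_of_mem fun j _ => ?_
      simp only [not_le]
      exact (σ.symm j).isLt
    have hc0 : f (fun _ => M 0) ≤ sug w (fun i => f (fun _ => x i)) := by
      rw [hMzero, ← hwe]; exact hwesug
    have hkey : ∀ k, k < n → w (B k) ⊓ f (fun _ => M (k + 1)) ≤
        sug w (fun i => f (fun _ => x i)) := by
      intro k hk
      refine le_trans ?_ (term_le_sug w (fun i => f (fun _ => x i)) (B k))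
      refine le_inf inf_le_left (inf_le_right.trans ?_)
      refine Finset.le_inf fun j hj => ?_
      have hjk : k ≤ ((σ.symm j : Fin n) : ℕ) := by
        simp only [hBdef, Finset.mem_filter] at hj
        exact hj.2
      have hTne : (Finset.univ.filter fun j : Fin n =>
          ((σ.symm j : Fin n) : ℕ) < k + 1).Nonempty := by
        refine ⟨σ ⟨k, hk⟩, ?_⟩
        simp
      have hMs : M (k + 1) = (Finset.univ.filter fun j : Fin n =>
          ((σ.symm j : Fin n) : ℕ) < k + 1).sup' hTne x := by
        simp only [hMdef]
        rw [Finset.sup'_eq_sup]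
      rw [hMs, delta_sup' f (fun a b => (hhom a b).2) hTne x]
      refine Finset.sup'_le _ _ fun i hi => ?_
      have hik : ((σ.symm i : Fin n) : ℕ) < k + 1 := (Finset.mem_filter.mp hi).2
      have hle : σ.symm i ≤ σ.symm j := by
        rw [Fin.le_def]; omega
      have := hy hle
      simpa using this
    set L := (Finset.range (n + 1)).inf fun k => w (B k) ⊔ f (fun _ => M k) with hLdef
    have main : ∀ k, k ≤ n →
        L ≤ sug w (fun i => f (fun _ => x i)) ∨ L ≤ w (B k) := by
      intro k
      induction k with
      | zero =>
          intro _
          have h0 : L ≤ w (B 0) ⊔ f (fun _ => M 0) := by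
            rw [hLdef]
            exact Finset.inf_le (Finset.mem_range.mpr (by omega))
          rcases le_sup_iff.mp h0 with h | h
          · exact Or.inr h
          · exact Or.inl (h.trans hc0)
      | succ k ih =>
          intro hk1
          rcases ih (by omega) with h | h
          · exact Or.inl h
          · have hk : L ≤ w (B (k + 1)) ⊔ f (fun _ => M (k + 1)) := by
              rw [hLdef]
              exact Finset.inf_le (Finset.mem_range.mpr (by omega))
            rcases le_sup_iff.mp hk with h2 | h2
            · exact Or.inr h2
            · exact Or.inl ((le_inf h h2).trans (hkey k (by omega)))
    rcases main n le_rfl with h | h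
    · exact hL.trans h
    · rw [hBn] at h
      exact hL.trans (h.trans hwesug)
  · -- each term ≤ f x
    rcases S.eq_empty_or_nonempty with rfl | hS
    · refine inf_le_left.trans ?_
      rw [hwdef]
      exact hmono fun i => by simp
    · have hm : S.inf (fun i => f (fun _ => x i)) = f (fun _ => S.inf' hS x) := by
        rw [← Finset.inf'_eq_inf hS]
        exact (delta_inf' f (fun a b => (hhom a b).1) hS x).symm
      have hsort : Monotone fun i : Fin n => f (fun _ =>
          (fun j => if j ∈ S then (⊤ : X) else ⊥)
            (Tuple.sort (fun i => f (fun _ => if i ∈ S then (⊤ : X) else ⊥)) i)) :=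
        fun a b h => Tuple.monotone_sort
          (fun i => f (fun _ => if i ∈ S then (⊤ : X) else ⊥)) h
      have happ := hmin (Tuple.sort (fun i => f (fun _ => if i ∈ S then (⊤ : X) else ⊥)))
        (fun j => if j ∈ S then (⊤ : X) else ⊥) (fun _ => S.inf' hS x) hsort monotone_const
      rw [hm, hwdef]
      calc f (fun i => if i ∈ S then (⊤ : X) else ⊥) ⊓ f (fun _ => S.inf' hS x)
          = f ((fun j => if j ∈ S then (⊤ : X) else ⊥) ⊓ (fun _ => S.inf' hS x)) := happ.symm
        _ ≤ f x := by
            refine hmono fun i => ?_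
            by_cases h : i ∈ S
            · simp only [Pi.inf_apply, if_pos h]
              exact inf_le_right.trans (Finset.inf'_le _ h)
            · simp [Pi.inf_apply, if_neg h]

end Repr
theorem statement_7 {X Y : Type*} [DistribLattice X] [BoundedOrder X]
    [LinearOrder Y] [BoundedOrder Y] {n : ℕ} (hn : 0 < n)
    (f : (Fin n → X) → Y) (hmono : Monotone f)
    (hhom : ∀ a b : X, f (fun _ => a ⊓ b) = f (fun _ => a) ⊓ f (fun _ => b) ∧
                       f (fun _ => a ⊔ b) = f (fun _ => a) ⊔ f (fun _ => b)) :
    IsQuasiPolynomial f ↔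
      ((∀ (σ : Equiv.Perm (Fin n)) (x x' : Fin n → X),
          Monotone (fun i => f (fun _ => x (σ i))) →
          Monotone (fun i => f (fun _ => x' (σ i))) →
          f (x ⊓ x') = f x ⊓ f x') ∧
       (∀ (σ : Equiv.Perm (Fin n)) (x x' : Fin n → X),
          Monotone (fun i => f (fun _ => x (σ i))) →
          Monotone (fun i => f (fun _ => x' (σ i))) →
          f (x ⊔ x') = f x ⊔ f x')) := by
  constructor
  · rintro ⟨p, φ, hp, -, hrep⟩
    obtain ⟨w, hw, hdnf⟩ := dnf hp
    have hδ : ∀ a : X, f (fun _ => a) = w ∅ ⊔ (φ a ⊓ w Finset.univ) := by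
      intro a
      rw [hrep, hdnf]
      exact sug_const hw hn (φ a)
    have hfx : ∀ x : Fin n → X, f x = sug w (fun i => f (fun _ => x i)) := by
      intro x
      rw [hrep, hdnf]
      have : (fun i => f (fun _ => x i)) = fun i => w ∅ ⊔ (φ (x i) ⊓ w Finset.univ) :=
        funext fun i => hδ (x i)
      rw [this, sug_clamp hw]
    have h0 : ∀ a : X, w ∅ ≤ f (fun _ => a) := by
      intro a; rw [hδ a]; exact le_sup_left
    constructor
    · intro σ x x' hx hx'
      have e : (fun i => f (fun _ => (x ⊓ x') i)) =
          fun i => (f fun _ => x i) ⊓ (f fun _ => x' i) :=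
        funext fun i => (hhom (x i) (x' i)).1
      rw [hfx (x ⊓ x'), e,
        sug_inf_comono hw σ (y := fun i => f (fun _ => x i)) (y' := fun i => f (fun _ => x' i))
          hx hx' (fun i => h0 (x i)) (fun i => h0 (x' i)), ← hfx x, ← hfx x']
    · intro σ x x' hx hx'
      have e : (fun i => f (fun _ => (x ⊔ x') i)) =
          fun i => (f fun _ => x i) ⊔ (f fun _ => x' i) :=
        funext fun i => (hhom (x i) (x' i)).2
      rw [hfx (x ⊔ x'), e,
        sug_sup_comono σ (w := w) (y := fun i => f (fun _ => x i))
          (y' := fun i => f (fun _ => x' i)) hx hx', ← hfx x, ← hfx x']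
  · rintro ⟨hmin, hmax⟩
    refine ⟨sug (fun S => f (fun i => if i ∈ S then ⊤ else ⊥)), fun a => f (fun _ => a),
      isPoly_sug _, ?_, ?_⟩
    · intro a
      have h1 : f (fun _ => (⊥ : X)) ≤ f (fun _ => a) := hmono fun _ => bot_le
      have h2 : f (fun _ => a) ≤ f (fun _ => (⊤ : X)) := hmono fun _ => le_top
      simp only [med, inf_eq_left.mpr h2, inf_eq_left.mpr h1,
        inf_eq_right.mpr (h1.trans h2), sup_eq_right.mpr h1, sup_eq_left.mpr h1]
    · exact repr_main f hmono hhom hmin hmax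
end

section
/- A unary function f : X → X is a polynomial function (in one variable) if and only if f ∘ f = f, f is a lattice homomorphism, and the range of f is a convex subset of X. -/
/-- Unary lattice polynomial functions on a bounded distributive lattice:
the smallest set of functions `X → X` containing the identity and all constants
and closed under pointwise meet and join. -/
inductive IsUnaryPolynomial {X : Type*} [DistribLattice X] [BoundedOrder X] :
    (X → X) → Prop
  | id : IsUnaryPolynomial (fun x => x)
  | const (c : X) : IsUnaryPolynomial (fun _ => c)
  | inf {p q : X → X} :
      IsUnaryPolynomial p → IsUnaryPolynomial q → IsUnaryPolynomial (fun x => p x ⊓ q x)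
  | sup {p q : X → X} :
      IsUnaryPolynomial p → IsUnaryPolynomial q → IsUnaryPolynomial (fun x => p x ⊔ q x)

/-- A subset `S` of a lattice is convex. -/
def IsConvexSet {X : Type*} [Lattice X] (S : Set X) : Prop :=
  ∀ a ∈ S, ∀ b ∈ S, ∀ c : X, a ≤ c → c ≤ b → c ∈ S

private lemma med_comm {X : Type*} [DistribLattice X] {a b : X} (h : a ≤ b) (x : X) :
    (x ⊔ a) ⊓ b = (x ⊓ b) ⊔ a := by
  rw [inf_sup_right, inf_eq_left.mpr h]

private lemma normal_form {X : Type*} [DistribLattice X] [BoundedOrder X] {f : X → X}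
    (hf : IsUnaryPolynomial f) : ∃ a b : X, a ≤ b ∧ ∀ x, f x = (x ⊔ a) ⊓ b := by
  induction hf with
  | id => exact ⟨⊥, ⊤, bot_le, fun x => by simp⟩
  | const c => exact ⟨c, c, le_rfl, fun x => by simp⟩
  | inf hp hq ihp ihq =>
      obtain ⟨a1, b1, h1, e1⟩ := ihp
      obtain ⟨a2, b2, h2, e2⟩ := ihq
      refine ⟨a1 ⊓ a2, b1 ⊓ b2, inf_le_inf h1 h2, fun x => ?_⟩
      dsimp only
      rw [e1, e2, inf_inf_inf_comm, ← sup_inf_left]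
  | sup hp hq ihp ihq =>
      obtain ⟨a1, b1, h1, e1⟩ := ihp
      obtain ⟨a2, b2, h2, e2⟩ := ihq
      refine ⟨a1 ⊔ a2, b1 ⊔ b2, sup_le_sup h1 h2, fun x => ?_⟩
      dsimp only
      rw [e1, e2, med_comm h1 x, med_comm h2 x, med_comm (sup_le_sup h1 h2) x,
        sup_sup_sup_comm, ← inf_sup_left]

theorem statement_8 {X : Type*} [DistribLattice X] [BoundedOrder X] (f : X → X) :
    IsUnaryPolynomial f ↔
      (f ∘ f = f ∧
       (∀ a b : X, f (a ⊓ b) = f a ⊓ f b ∧ f (a ⊔ b) = f a ⊔ f b) ∧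
       IsConvexSet (Set.range f)) := by
  constructor
  · intro hf
    obtain ⟨a, b, hab, e⟩ := normal_form hf
    have hle : ∀ x, a ≤ f x ∧ f x ≤ b := by
      intro x
      rw [e x]
      exact ⟨le_inf le_sup_right hab, inf_le_right⟩
    refine ⟨?_, ?_, ?_⟩
    · funext x
      show f (f x) = f x
      rw [e x, e ((x ⊔ a) ⊓ b), sup_eq_left.mpr (le_inf le_sup_right hab),
        inf_assoc, inf_idem]
    · intro u v
      constructor
      · rw [e u, e v, e (u ⊓ v), inf_inf_inf_comm, inf_idem, sup_inf_right]
      · rw [e u, e v, e (u ⊔ v), med_comm hab, med_comm hab, med_comm hab,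
          sup_sup_sup_comm, sup_idem, inf_sup_right]
    · rintro _ ⟨u, rfl⟩ _ ⟨v, rfl⟩ c huc hcv
      have hac : a ≤ c := (hle u).1.trans huc
      have hcb : c ≤ b := hcv.trans (hle v).2
      refine ⟨c, ?_⟩
      rw [e c, sup_eq_left.mpr hac, inf_eq_left.mpr hcb]
  · rintro ⟨hidem, hhom, hconv⟩
    have fix : ∀ y, f (f y) = f y := fun y => congrFun hidem y
    set a := f ⊥ with ha
    set b := f ⊤ with hb
    have hfa : f a = a := fix ⊥
    have hfb' : f b = b := fix ⊤
    have haf : ∀ x, a ≤ f x := by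
      intro x
      have := (hhom x ⊥).2
      rw [sup_bot_eq] at this
      exact le_sup_right.trans this.ge
    have hfb : ∀ x, f x ≤ b := by
      intro x
      have := (hhom x ⊤).1
      rw [inf_top_eq] at this
      exact this.le.trans inf_le_right
    have hab : a ≤ b := haf ⊤
    have key : ∀ x, f x = (x ⊓ b) ⊔ a := by
      intro x
      have hc1 : a ≤ (x ⊓ b) ⊔ a := le_sup_right
      have hc2 : (x ⊓ b) ⊔ a ≤ b := sup_le inf_le_right hab
      obtain ⟨y, hy⟩ := hconv a ⟨⊥, rfl⟩ b ⟨⊤, rfl⟩ ((x ⊓ b) ⊔ a) hc1 hc2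
      have hfix : f ((x ⊓ b) ⊔ a) = (x ⊓ b) ⊔ a := by
        rw [← hy, fix]
      have expand : f ((x ⊓ b) ⊔ a) = (f x ⊓ b) ⊔ a := by
        rw [(hhom (x ⊓ b) a).2, (hhom x b).1, hfa, hfb']
      have h3 : (x ⊓ b) ⊔ a = (f x ⊓ b) ⊔ a := by rw [← hfix, expand]
      rw [h3, inf_eq_left.mpr (hfb x), sup_eq_left.mpr (haf x)]
    have hfe : f = fun x => ((fun y => y) x ⊓ (fun _ => b) x) ⊔ (fun _ => a) x := by
      funext x; exact key x
    rw [hfe]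
    exact IsUnaryPolynomial.sup
      (IsUnaryPolynomial.inf IsUnaryPolynomial.id (IsUnaryPolynomial.const b))
      (IsUnaryPolynomial.const a)
end
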